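/- arXiv:1108.3535 — 16 statements merged into one kernel-verified Lean document; each statement's English description precedes it below -/
import Mathlib

section
/- For every integer n ≥ 0 and every real number w ≠ 0, one has (1 - a_{n-1}) · w^n · S_n(w + 1/w) = Φ_n(w²) + Φ*_n(w²). (This is the Delsarte–Genin map from the polynomials orthogonal on the unit circle to the symmetric polynomials S_n.) -/
/-- **Delsarte–Genin map** from polynomials orthogonal on the unit circle to the
symmetric polynomials `S_n`:
`(1 - a_{n-1}) · w^n · S_n(w + 1/w) = Φ_n(w²) + Φ*_n(w²)` for all `n ≥ 0` and `w ≠ 0`. -/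
theorem stmt_0 (a : ℤ → ℝ) (ha : a (-1) = -1) (hlt : ∀ n : ℤ, 0 ≤ n → |a n| < 1)
    (Φ Φs S : ℕ → ℝ → ℝ)
    (hΦ0 : ∀ z : ℝ, Φ 0 z = 1) (hΦs0 : ∀ z : ℝ, Φs 0 z = 1)
    (hΦ : ∀ (n : ℕ) (z : ℝ), Φ (n + 1) z = z * Φ n z - a n * Φs n z)
    (hΦs : ∀ (n : ℕ) (z : ℝ), Φs (n + 1) z = Φs n z - a n * z * Φ n z)
    (hS0 : ∀ x : ℝ, S 0 x = 1) (hS1 : ∀ x : ℝ, S 1 x = x)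
    (hS : ∀ n : ℕ, 1 ≤ n → ∀ x : ℝ,
      S (n + 1) x = x * S n x - (1 + a ((n : ℤ) - 1)) * (1 - a ((n : ℤ) - 2)) * S (n - 1) x)
    (n : ℕ) (w : ℝ) (hw : w ≠ 0) :
    (1 - a ((n : ℤ) - 1)) * w ^ n * S n (w + 1 / w) = Φ n (w ^ 2) + Φs n (w ^ 2) := by
  set x : ℝ := w + 1 / w with hxdef
  have hx : w * x = w ^ 2 + 1 := by field_simp [hxdef]; rw [hxdef, mul_add, mul_one_div_cancel hw]; ring
  suffices h : ∀ m : ℕ,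
      ((1 - a ((m : ℤ) - 1)) * w ^ m * S m x = Φ m (w ^ 2) + Φs m (w ^ 2)) ∧
      (w ^ (m + 1) * S (m + 1) x = w ^ 2 * Φ m (w ^ 2) + Φs m (w ^ 2)) from (h n).1
  intro m
  induction m with
  | zero =>
    constructor
    · simp [hS0, hΦ0, hΦs0, ha]
    · simp only [hS1, hΦ0, hΦs0]
      rw [pow_one]
      linarith [hx]
  | succ m ih =>
    obtain ⟨ih1, ih2⟩ := ih
    have hc1 : ((m + 1 : ℕ) : ℤ) - 1 = (m : ℤ) := by push_cast; ring
    have hc2 : ((m + 1 : ℕ) : ℤ) - 2 = (m : ℤ) - 1 := by push_cast; ring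
    constructor
    · rw [hc1, hΦ, hΦs]
      linear_combination (1 - a m) * ih2
    · rw [hS (m + 1) (by omega), hc1, hc2, hΦ, hΦs]
      simp only [Nat.add_sub_cancel]
      linear_combination w * x * ih2 + (w ^ 2 * Φ m (w ^ 2) + Φs m (w ^ 2)) * hx -
        (1 + a (m : ℤ)) * w ^ 2 * ih1
end

section
/- For every integer n ≥ 0 and every real number w ≠ 0, one has (w² - 1) · Φ_n(w²) = w^n · ( w · S_{n+1}(w + 1/w) - (1 - a_{n-1}) · S_n(w + 1/w) ). (This is the reciprocal of the Delsarte–Genin map, expressing the circle polynomials through the symmetric polynomials S_n; here σ_n = S_{n+1}(2)/S_n(2) = 1 - a_{n-1}.) -/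
/-- **Reciprocal of the Delsarte–Genin map**, expressing the circle polynomials `Φ_n`
through the symmetric polynomials `S_n`:
`(w² - 1)·Φ_n(w²) = w^n·(w·S_{n+1}(w + 1/w) - (1 - a_{n-1})·S_n(w + 1/w))`,
where `σ_n = S_{n+1}(2)/S_n(2) = 1 - a_{n-1}`. -/
theorem stmt_1 (a : ℤ → ℝ) (ha : a (-1) = -1) (hlt : ∀ n : ℤ, 0 ≤ n → |a n| < 1)
    (Φ Φs S : ℕ → ℝ → ℝ)
    (hΦ0 : ∀ z : ℝ, Φ 0 z = 1) (hΦs0 : ∀ z : ℝ, Φs 0 z = 1)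
    (hΦ : ∀ (n : ℕ) (z : ℝ), Φ (n + 1) z = z * Φ n z - a n * Φs n z)
    (hΦs : ∀ (n : ℕ) (z : ℝ), Φs (n + 1) z = Φs n z - a n * z * Φ n z)
    (hS0 : ∀ x : ℝ, S 0 x = 1) (hS1 : ∀ x : ℝ, S 1 x = x)
    (hS : ∀ n : ℕ, 1 ≤ n → ∀ x : ℝ,
      S (n + 1) x = x * S n x - (1 + a ((n : ℤ) - 1)) * (1 - a ((n : ℤ) - 2)) * S (n - 1) x)
    (n : ℕ) (w : ℝ) (hw : w ≠ 0) :
    (w ^ 2 - 1) * Φ n (w ^ 2) =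
      w ^ n * (w * S (n + 1) (w + 1 / w) - (1 - a ((n : ℤ) - 1)) * S n (w + 1 / w)) := by
  suffices h : ∀ m : ℕ,
      (w ^ 2 - 1) * Φ m (w ^ 2) =
        w ^ m * (w * S (m + 1) (w + 1 / w) - (1 - a ((m : ℤ) - 1)) * S m (w + 1 / w)) ∧
      (w ^ 2 - 1) * Φs m (w ^ 2) =
        w ^ (m + 1) * (w * (1 - a ((m : ℤ) - 1)) * S m (w + 1 / w) - S (m + 1) (w + 1 / w)) by
    exact (h n).1
  intro m
  induction m with
  | zero =>
    constructor
    · simp only [Nat.cast_zero, zero_sub, hΦ0, hS0, hS1, ha, pow_zero]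
      field_simp
      ring
    · simp only [Nat.cast_zero, zero_sub, hΦs0, hS0, hS1, ha, pow_zero]
      field_simp
      ring
  | succ k ih =>
    obtain ⟨ih1, ih2⟩ := ih
    have hS2 := hS (k + 1) (by omega) (w + 1 / w)
    have e1 : ((k + 1 : ℕ) : ℤ) - 1 = (k : ℤ) := by push_cast; ring
    have e2 : ((k + 1 : ℕ) : ℤ) - 2 = (k : ℤ) - 1 := by push_cast; ring
    rw [e1, e2, show (k + 1) - 1 = k from rfl] at hS2
    rw [show ((k + 1 : ℕ) : ℤ) - 1 = ((k : ℕ) : ℤ) from e1]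
    have hwx : w * (w + 1 / w) = w ^ 2 + 1 := by field_simp
    constructor
    · have key : (w ^ 2 - 1) * Φ (k + 1) (w ^ 2) =
          w ^ 2 * ((w ^ 2 - 1) * Φ k (w ^ 2)) - a k * ((w ^ 2 - 1) * Φs k (w ^ 2)) := by
        rw [hΦ]; ring
      rw [key, ih1, ih2, hS2]
      field_simp
      ring
    · have key : (w ^ 2 - 1) * Φs (k + 1) (w ^ 2) =
          (w ^ 2 - 1) * Φs k (w ^ 2) - a k * w ^ 2 * ((w ^ 2 - 1) * Φ k (w ^ 2)) := by
        rw [hΦs]; ring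
      rw [key, ih1, ih2, hS2]
      field_simp
      ring
end

section
/- For every integer n ≥ 0 and every real x, one has (x + 2) · Q_n(x) = S_{n+1}(x) + (1 - a_{n-1}) · S_n(x). In other words, the polynomials Q_n are exactly the Christoffel transforms at the point -2 of the symmetric polynomials S_n (with A_n = S_{n+1}(-2)/S_n(-2) = a_{n-1} - 1). -/
/-- The polynomials `Q_n` are the Christoffel transforms at the point `-2` of the
symmetric polynomials `S_n`:
`(x + 2)·Q_n(x) = S_{n+1}(x) + (1 - a_{n-1})·S_n(x)`
(with `A_n = S_{n+1}(-2)/S_n(-2) = a_{n-1} - 1`). -/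
theorem stmt_2 (a : ℤ → ℝ) (ha : a (-1) = -1) (hlt : ∀ n : ℤ, 0 ≤ n → |a n| < 1)
    (S Q : ℕ → ℝ → ℝ)
    (hS0 : ∀ x : ℝ, S 0 x = 1) (hS1 : ∀ x : ℝ, S 1 x = x)
    (hS : ∀ n : ℕ, 1 ≤ n → ∀ x : ℝ,
      S (n + 1) x = x * S n x - (1 + a ((n : ℤ) - 1)) * (1 - a ((n : ℤ) - 2)) * S (n - 1) x)
    (hQ0 : ∀ x : ℝ, Q 0 x = 1)
    (hQ1 : ∀ x : ℝ, Q 1 x = x - (a 0 - a (-1)))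
    (hQ : ∀ n : ℕ, 1 ≤ n → ∀ x : ℝ,
      Q (n + 1) x = (x - (a n - a ((n : ℤ) - 1))) * Q n x -
        (1 - a ((n : ℤ) - 1) ^ 2) * Q (n - 1) x)
    (n : ℕ) (x : ℝ) :
    (x + 2) * Q n x = S (n + 1) x + (1 - a ((n : ℤ) - 1)) * S n x := by
  induction n using Nat.twoStepInduction with
  | zero =>
    simp only [hQ0, hS1, hS0]
    norm_num [ha]
  | one =>
    have h2 := hS 1 le_rfl x
    simp only [Nat.cast_one] at h2 ⊢
    norm_num [hQ1, hS1, hS0, ha] at h2 ⊢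
    rw [h2]
    ring
  | more n ih1 ih2 =>
    have hq := hQ (n + 1) (by omega) x
    have hs2 := hS (n + 2) (by omega) x
    have hs1 := hS (n + 1) (by omega) x
    push_cast at hq hs2 hs1 ih1 ih2 ⊢
    simp only [show ((n:ℤ) + 1 - 1) = (n:ℤ) from by ring,
        show ((n:ℤ) + 1 - 2) = (n:ℤ) - 1 from by ring,
        show ((n:ℤ) + 2 - 1) = (n:ℤ) + 1 from by ring,
        show ((n:ℤ) + 2 - 2) = (n:ℤ) from by ring] at hq hs2 hs1 ih2 ⊢
    rw [hq, hs2]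
    simp only [show n + 1 + 1 = n + 2 from rfl] at hs1 ih2
    linear_combination (x - (a ((n:ℤ)+1) - a n)) * ih2 - (1 - a (n:ℤ) ^ 2) * ih1
      + (a (n:ℤ) - 1) * hs1
end

section
/- For every integer n ≥ 1 and every real x, one has S_n(x) = Q_n(x) + (1 + a_{n-1}) · Q_{n-1}(x). (This is the Geronimus transform inverse to the Christoffel transform relating S_n and Q_n.) -/
/-- The **Geronimus transform** inverse to the Christoffel transform relating
`S_n` and `Q_n`: for `n ≥ 1`, `S_n(x) = Q_n(x) + (1 + a_{n-1})·Q_{n-1}(x)`. -/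
theorem stmt_3 (a : ℤ → ℝ) (ha : a (-1) = -1) (hlt : ∀ n : ℤ, 0 ≤ n → |a n| < 1)
    (S Q : ℕ → ℝ → ℝ)
    (hS0 : ∀ x : ℝ, S 0 x = 1) (hS1 : ∀ x : ℝ, S 1 x = x)
    (hS : ∀ n : ℕ, 1 ≤ n → ∀ x : ℝ,
      S (n + 1) x = x * S n x - (1 + a ((n : ℤ) - 1)) * (1 - a ((n : ℤ) - 2)) * S (n - 1) x)
    (hQ0 : ∀ x : ℝ, Q 0 x = 1)
    (hQ1 : ∀ x : ℝ, Q 1 x = x - (a 0 - a (-1)))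
    (hQ : ∀ n : ℕ, 1 ≤ n → ∀ x : ℝ,
      Q (n + 1) x = (x - (a n - a ((n : ℤ) - 1))) * Q n x -
        (1 - a ((n : ℤ) - 1) ^ 2) * Q (n - 1) x)
    (n : ℕ) (hn : 1 ≤ n) (x : ℝ) :
    S n x = Q n x + (1 + a ((n : ℤ) - 1)) * Q (n - 1) x := by
  have key : ∀ m : ℕ,
      (∀ y : ℝ, S (m + 1) y = Q (m + 1) y + (1 + a (m : ℤ)) * Q m y) ∧
      (∀ y : ℝ, S (m + 2) y = Q (m + 2) y + (1 + a ((m : ℤ) + 1)) * Q (m + 1) y) := by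
    intro m
    induction m with
    | zero =>
      constructor
      · intro y
        rw [hS1, hQ1, hQ0, ha]
        ring
      · intro y
        have h1 := hS 1 le_rfl y
        have h2 := hQ 1 le_rfl y
        norm_num at h1 h2 ⊢
        rw [h1, h2, hS1, hS0, hQ1, hQ0, ha]
        ring
    | succ k ih =>
      obtain ⟨ih1, ih2⟩ := ih
      refine ⟨by intro y; have := ih2 y; push_cast; push_cast at this; convert this using 3 <;> ring, ?_⟩
      intro y
      have h1 := hS (k + 2) (by omega) y
      have h2 := hQ (k + 2) (by omega) y
      have h3 := hQ (k + 1) (by omega) y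
      have e1 := ih1 y
      have e2 := ih2 y
      push_cast at h1 h2 h3 e1 e2 ⊢
      norm_num at h1 h2 h3 ⊢
      simp only [show ((k:ℤ) + 2 - 1) = (k:ℤ) + 1 by ring,
        show ((k:ℤ) + 1 + 1) = (k:ℤ) + 2 by ring] at h1 h2 h3 ⊢
      linear_combination h1 + y * e2 - (1 + a ((k:ℤ) + 1)) * (1 - a (k:ℤ)) * e1 - h2 -
        (1 + a ((k:ℤ) + 1)) * h3
  obtain ⟨m, rfl⟩ : ∃ m, n = m + 1 := ⟨n - 1, by omega⟩
  have := (key m).1 x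
  push_cast
  norm_num
  convert this using 3 <;> push_cast <;> ring
end

section
/- For every integer n ≥ 0 and every real number w ≠ 0, one has (1 + w) · w^n · Q_n(w + 1/w) = Φ*_n(w²) + w · Φ_n(w²). (This expresses the Schur–Delsarte–Genin transformed polynomials Q_n in terms of the polynomials orthogonal on the unit circle.) -/
/-- The Schur–Delsarte–Genin transformed polynomials `Q_n` in terms of the polynomials
orthogonal on the unit circle:
`(1 + w)·w^n·Q_n(w + 1/w) = Φ*_n(w²) + w·Φ_n(w²)` for all `n ≥ 0` and `w ≠ 0`. -/
theorem stmt_4 (a : ℤ → ℝ) (ha : a (-1) = -1) (hlt : ∀ n : ℤ, 0 ≤ n → |a n| < 1)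
    (Φ Φs Q : ℕ → ℝ → ℝ)
    (hΦ0 : ∀ z : ℝ, Φ 0 z = 1) (hΦs0 : ∀ z : ℝ, Φs 0 z = 1)
    (hΦ : ∀ (n : ℕ) (z : ℝ), Φ (n + 1) z = z * Φ n z - a n * Φs n z)
    (hΦs : ∀ (n : ℕ) (z : ℝ), Φs (n + 1) z = Φs n z - a n * z * Φ n z)
    (hQ0 : ∀ x : ℝ, Q 0 x = 1)
    (hQ1 : ∀ x : ℝ, Q 1 x = x - (a 0 - a (-1)))
    (hQ : ∀ n : ℕ, 1 ≤ n → ∀ x : ℝ,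
      Q (n + 1) x = (x - (a n - a ((n : ℤ) - 1))) * Q n x -
        (1 - a ((n : ℤ) - 1) ^ 2) * Q (n - 1) x)
    (n : ℕ) (w : ℝ) (hw : w ≠ 0) :
    (1 + w) * w ^ n * Q n (w + 1 / w) = Φs n (w ^ 2) + w * Φ n (w ^ 2) := by
  induction n using Nat.twoStepInduction with
  | zero => simp [hQ0, hΦ0, hΦs0]
  | one =>
    have h0 : ((0 : ℕ) : ℤ) = 0 := by norm_num
    rw [hQ1, hΦ 0, hΦs 0, hΦ0, hΦs0, ha, h0]
    field_simp
    ring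
  | more n ih1 ih2 =>
    have key := hQ (n + 1) (by omega) (w + 1 / w)
    push_cast at key
    simp only [add_sub_cancel_right] at key
    have e1 : (n : ℤ) + 1 + 1 = ((n + 2 : ℕ) : ℤ) := by push_cast; ring
    have e2 : n + 1 + 1 = n + 2 := rfl
    rw [e2] at key
    rw [key, hΦ (n + 1), hΦs (n + 1), hΦ n, hΦs n]
    rw [hΦ n, hΦs n] at ih2
    have e3 : ((n + 1 : ℕ) : ℤ) = (n : ℤ) + 1 := by push_cast; ring
    rw [e3]
    simp only [Nat.add_sub_cancel] at *
    linear_combination (norm := (field_simp; ring))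
      ((w + 1 / w - (a ((n : ℤ) + 1) - a (n : ℤ))) * w) * ih2 -
      ((1 - a (n : ℤ) ^ 2) * w ^ 2) * ih1
end

section
/- For every integer n ≥ 0 and every real number w ≠ 0, one has w(1 - w) · Φ_n(w²) = w^n · (1 - a_n w) · Q_n(w + 1/w) - w^{n+1} · Q_{n+1}(w + 1/w). (This expresses the circle polynomials Φ_n in terms of the polynomials Q_n.) -/
/-- The circle polynomials `Φ_n` in terms of the polynomials `Q_n`:
`w(1 - w)·Φ_n(w²) = w^n·(1 - a_n·w)·Q_n(w + 1/w) - w^{n+1}·Q_{n+1}(w + 1/w)`. -/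
theorem stmt_6 (a : ℤ → ℝ) (ha : a (-1) = -1) (hlt : ∀ n : ℤ, 0 ≤ n → |a n| < 1)
    (Φ Φs Q : ℕ → ℝ → ℝ)
    (hΦ0 : ∀ z : ℝ, Φ 0 z = 1) (hΦs0 : ∀ z : ℝ, Φs 0 z = 1)
    (hΦ : ∀ (n : ℕ) (z : ℝ), Φ (n + 1) z = z * Φ n z - a n * Φs n z)
    (hΦs : ∀ (n : ℕ) (z : ℝ), Φs (n + 1) z = Φs n z - a n * z * Φ n z)
    (hQ0 : ∀ x : ℝ, Q 0 x = 1)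
    (hQ1 : ∀ x : ℝ, Q 1 x = x - (a 0 - a (-1)))
    (hQ : ∀ n : ℕ, 1 ≤ n → ∀ x : ℝ,
      Q (n + 1) x = (x - (a n - a ((n : ℤ) - 1))) * Q n x -
        (1 - a ((n : ℤ) - 1) ^ 2) * Q (n - 1) x)
    (n : ℕ) (w : ℝ) (hw : w ≠ 0) :
    w * (1 - w) * Φ n (w ^ 2) =
      w ^ n * (1 - a n * w) * Q n (w + 1 / w) - w ^ (n + 1) * Q (n + 1) (w + 1 / w) := by
  have hwt : w * (1 / w) = 1 := by field_simp
  set x : ℝ := w + 1 / w with hx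
  have key : ∀ m : ℕ,
      (w * (1 - w) * Φ m (w ^ 2) =
        w ^ m * (1 - a m * w) * Q m x - w ^ (m + 1) * Q (m + 1) x) ∧
      (w * (1 - w) * Φs m (w ^ 2) =
        w ^ (m + 2) * Q (m + 1) x - w ^ (m + 2) * (w - a m) * Q m x) := by
    intro m
    induction m with
    | zero =>
      constructor
      · rw [hΦ0, hQ0, hQ1, ha]
        linear_combination hwt
      · rw [hΦs0, hQ0, hQ1, ha]
        linear_combination (-w) * hwt
    | succ m ih =>
      obtain ⟨ih1, ih2⟩ := ih
      have hrec : Q (m + 1 + 1) x =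
          (x - (a (m + 1) - a m)) * Q (m + 1) x - (1 - a m ^ 2) * Q m x := by
        have := hQ (m + 1) (by omega) x
        have hcast : ((m + 1 : ℕ) : ℤ) - 1 = (m : ℤ) := by push_cast; ring
        rw [hcast] at this
        simpa using this
      constructor
      · rw [hΦ (m) (w ^ 2), hrec]
        push_cast
        linear_combination w ^ 2 * ih1 - a m * ih2 + (w ^ (m + 1) * Q (m + 1) x) * hwt
      · rw [hΦs (m) (w ^ 2), hrec]
        push_cast
        linear_combination ih2 - a m * w ^ 2 * ih1 - (w ^ (m + 2) * Q (m + 1) x) * hwt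
  exact (key n).1
end

section
/- For every integer n ≥ 0 and every real x, one has (x - 2) · T_n(x) = Q_{n+1}(x) - (1 - a_n) · Q_n(x). In other words, the symmetric polynomials T_n are the Christoffel transforms at the point 2 of the polynomials Q_n (with Q_{n+1}(2)/Q_n(2) = 1 - a_n). -/
/-- The symmetric polynomials `T_n` are the Christoffel transforms at the point `2`
of the polynomials `Q_n`:
`(x - 2)·T_n(x) = Q_{n+1}(x) - (1 - a_n)·Q_n(x)` (with `Q_{n+1}(2)/Q_n(2) = 1 - a_n`). -/
theorem stmt_7 (a : ℤ → ℝ) (ha : a (-1) = -1) (hlt : ∀ n : ℤ, 0 ≤ n → |a n| < 1)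
    (Q T : ℕ → ℝ → ℝ)
    (hQ0 : ∀ x : ℝ, Q 0 x = 1)
    (hQ1 : ∀ x : ℝ, Q 1 x = x - (a 0 - a (-1)))
    (hQ : ∀ n : ℕ, 1 ≤ n → ∀ x : ℝ,
      Q (n + 1) x = (x - (a n - a ((n : ℤ) - 1))) * Q n x -
        (1 - a ((n : ℤ) - 1) ^ 2) * Q (n - 1) x)
    (hT0 : ∀ x : ℝ, T 0 x = 1) (hT1 : ∀ x : ℝ, T 1 x = x)
    (hT : ∀ n : ℕ, 1 ≤ n → ∀ x : ℝ,
      T (n + 1) x = x * T n x - (1 + a ((n : ℤ) - 1)) * (1 - a n) * T (n - 1) x)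
    (n : ℕ) (x : ℝ) :
    (x - 2) * T n x = Q (n + 1) x - (1 - a n) * Q n x := by
  induction n using Nat.twoStepInduction with
  | zero =>
    rw [hT0, hQ1, hQ0, ha]
    push_cast
    ring
  | one =>
    have h2 := hQ 1 le_rfl x
    norm_num at h2
    rw [hT1, h2, hQ1, hQ0, ha]
    push_cast
    ring
  | more n ih1 ih2 =>
    have hT2 := hT (n + 1) (by omega) x
    have hQ2 := hQ (n + 1) (by omega) x
    have hQ3 := hQ (n + 2) (by omega) x
    have c1 : ((n : ℤ) + 1) - 1 = (n : ℤ) := by ring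
    have c2 : ((n : ℤ) + 2) - 1 = (n : ℤ) + 1 := by ring
    push_cast at hT2 hQ2 hQ3 ih1 ih2 ⊢
    rw [c1] at hT2 hQ2
    rw [c2] at hQ3
    linear_combination (x - 2) * hT2 - hQ3 + x * ih2
      - ((1 + a n) * (1 - a ((n : ℤ) + 1))) * ih1 + (1 - a ((n : ℤ) + 1)) * hQ2
end

section
/- For every integer n ≥ 0 and every real x, one has (x² - 4) · T_n(x) = x · S_{n+1}(x) - 2(1 - a_{n-1}) · S_n(x). (This realizes T_n as a symmetric double Christoffel transform of S_n at the points ±2.) -/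
/-- `T_n` as a symmetric double Christoffel transform of `S_n` at the points `±2`:
`(x² - 4)·T_n(x) = x·S_{n+1}(x) - 2(1 - a_{n-1})·S_n(x)`. -/
theorem stmt_8 (a : ℤ → ℝ) (ha : a (-1) = -1) (hlt : ∀ n : ℤ, 0 ≤ n → |a n| < 1)
    (S T : ℕ → ℝ → ℝ)
    (hS0 : ∀ x : ℝ, S 0 x = 1) (hS1 : ∀ x : ℝ, S 1 x = x)
    (hS : ∀ n : ℕ, 1 ≤ n → ∀ x : ℝ,
      S (n + 1) x = x * S n x - (1 + a ((n : ℤ) - 1)) * (1 - a ((n : ℤ) - 2)) * S (n - 1) x)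
    (hT0 : ∀ x : ℝ, T 0 x = 1) (hT1 : ∀ x : ℝ, T 1 x = x)
    (hT : ∀ n : ℕ, 1 ≤ n → ∀ x : ℝ,
      T (n + 1) x = x * T n x - (1 + a ((n : ℤ) - 1)) * (1 - a n) * T (n - 1) x)
    (n : ℕ) (x : ℝ) :
    (x ^ 2 - 4) * T n x = x * S (n + 1) x - 2 * (1 - a ((n : ℤ) - 1)) * S n x := by
  induction n using Nat.twoStepInduction with
  | zero =>
    rw [hT0, hS1, hS0]
    norm_num [ha]
    ring
  | one =>
    have h2 := hS 1 le_rfl x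
    norm_num at h2 ⊢
    rw [hT1, h2, hS1, hS0, ha]
    ring
  | more n ih0 ih1 =>
    have hTrec := hT (n + 1) (by omega) x
    have hSrec3 := hS (n + 2) (by omega) x
    have hSrec2 := hS (n + 1) (by omega) x
    push_cast at hTrec hSrec3 hSrec2 ih0 ih1 ⊢
    simp only [show ((n:ℤ)+2-1) = (n:ℤ)+1 from by ring, show ((n:ℤ)+1-2) = (n:ℤ)-1 from by ring,
      show ((n:ℤ)+1-1) = (n:ℤ) from by ring, show ((n:ℤ)+2-2) = (n:ℤ) from by ring,
      Nat.add_sub_cancel] at hTrec hSrec3 hSrec2 ih0 ih1 ⊢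
    rw [hTrec, hSrec3, hSrec2]
    linear_combination x * ih1 - (1 + a ((n:ℤ))) * (1 - a ((n:ℤ)+1)) * ih0 + x ^ 2 * hSrec2
end

section
/- For every integer n ≥ 0 and every real number w ≠ 0, one has (w² - 1) · w^n · T_n(w + 1/w) = w² · Φ_n(w²) - Φ*_n(w²). (This expresses the symmetric companion polynomials T_n in terms of the polynomials orthogonal on the unit circle.) -/
/-- The symmetric companion polynomials `T_n` in terms of the polynomials orthogonal
on the unit circle: `(w² - 1)·w^n·T_n(w + 1/w) = w²·Φ_n(w²) - Φ*_n(w²)`. -/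
theorem stmt_9 (a : ℤ → ℝ) (ha : a (-1) = -1) (hlt : ∀ n : ℤ, 0 ≤ n → |a n| < 1)
    (Φ Φs T : ℕ → ℝ → ℝ)
    (hΦ0 : ∀ z : ℝ, Φ 0 z = 1) (hΦs0 : ∀ z : ℝ, Φs 0 z = 1)
    (hΦ : ∀ (n : ℕ) (z : ℝ), Φ (n + 1) z = z * Φ n z - a n * Φs n z)
    (hΦs : ∀ (n : ℕ) (z : ℝ), Φs (n + 1) z = Φs n z - a n * z * Φ n z)
    (hT0 : ∀ x : ℝ, T 0 x = 1) (hT1 : ∀ x : ℝ, T 1 x = x)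
    (hT : ∀ n : ℕ, 1 ≤ n → ∀ x : ℝ,
      T (n + 1) x = x * T n x - (1 + a ((n : ℤ) - 1)) * (1 - a n) * T (n - 1) x)
    (n : ℕ) (w : ℝ) (hw : w ≠ 0) :
    (w ^ 2 - 1) * w ^ n * T n (w + 1 / w) = w ^ 2 * Φ n (w ^ 2) - Φs n (w ^ 2) := by
  induction n using Nat.twoStepInduction with
  | zero => simp [hT0, hΦ0, hΦs0]
  | one =>
    rw [hT1, hΦ 0, hΦs 0, hΦ0, hΦs0]
    field_simp
    ring
  | more n ih1 ih2 =>
    have hrec := hT (n + 1) (Nat.le_add_left 1 n) (w + 1 / w)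
    have hc : ((n : ℤ) + 1 - 1) = (n : ℤ) := by ring
    push_cast at hrec
    rw [hc] at hrec
    rw [hΦ n, hΦs n] at ih2
    rw [hΦ (n + 1), hΦs (n + 1), hΦ n, hΦs n, hrec]
    push_cast
    have hx : w * (1 / w) = 1 := by field_simp
    linear_combination (w ^ 2 + 1) * ih2 -
      w ^ 2 * (1 + a n) * (1 - a (n + 1)) * ih1 +
      (w ^ 2 - 1) * w ^ (n + 1) * T (n + 1) (w + 1 / w) * hx
end

section
/- Let ξ > -1 and η > -1 be real. Then for every integer n ≥ 1 with n + ξ + η ≠ 0, one has: if n is even, (1 + a_{n-1})(1 - a_{n-2}) = n(n + 2ξ) / ((n + ξ + η)(n + ξ + η + 1)), and if n is odd, (1 + a_{n-1})(1 - a_{n-2}) = (n + 2η + 1)(n + 2ξ + 2η + 1) / ((n + ξ + η)(n + ξ + η + 1)). That is, the Delsarte–Genin image of the Jacobi polynomials on the unit circle is the family of generalized Gegenbauer polynomials, whose recurrence coefficients v_n = (1 + a_{n-1})(1 - a_{n-2}) are given by these formulas. -/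
/-- The Delsarte–Genin image of the Jacobi polynomials on the unit circle is the family
of generalized Gegenbauer polynomials: for the Jacobi OPUC reflection parameters `a_n`,
the recurrence coefficients `v_n = (1 + a_{n-1})(1 - a_{n-2})` are
`n(n + 2ξ)/((n + ξ + η)(n + ξ + η + 1))` for `n` even and
`(n + 2η + 1)(n + 2ξ + 2η + 1)/((n + ξ + η)(n + ξ + η + 1))` for `n` odd. -/
theorem stmt_10 (ξ η : ℝ) (hξ : -1 < ξ) (hη : -1 < η)
    (a : ℤ → ℝ) (ha : a (-1) = -1)
    (hae : ∀ n : ℤ, 0 ≤ n → Even n → a n = (η - ξ) / ((n : ℝ) + ξ + η + 2))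
    (hao : ∀ n : ℤ, 0 ≤ n → Odd n → a n = -(1 + ξ + η) / ((n : ℝ) + ξ + η + 2))
    (n : ℕ) (hn : 1 ≤ n) (hden : (n : ℝ) + ξ + η ≠ 0) :
    (Even n → (1 + a ((n : ℤ) - 1)) * (1 - a ((n : ℤ) - 2)) =
      (n : ℝ) * ((n : ℝ) + 2 * ξ) / (((n : ℝ) + ξ + η) * ((n : ℝ) + ξ + η + 1))) ∧
    (Odd n → (1 + a ((n : ℤ) - 1)) * (1 - a ((n : ℤ) - 2)) =
      ((n : ℝ) + 2 * η + 1) * ((n : ℝ) + 2 * ξ + 2 * η + 1) /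
        (((n : ℝ) + ξ + η) * ((n : ℝ) + ξ + η + 1))) := by
  have hn1 : (1 : ℝ) ≤ (n : ℝ) := by exact_mod_cast hn
  have hne1 : (n : ℝ) + ξ + η + 1 ≠ 0 := by nlinarith
  rcases Nat.lt_or_ge n 2 with h2 | h2
  · have hn' : n = 1 := by omega
    subst hn'
    constructor
    · intro he; exact absurd he (by decide)
    · intro _
      have e1 : ((1 : ℕ) : ℤ) - 1 = 0 := by norm_num
      have e2 : ((1 : ℕ) : ℤ) - 2 = -1 := by norm_num
      have h0 := hae 0 le_rfl Even.zero
      rw [e1, e2, h0, ha]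
      have hd2 : ((0 : ℤ) : ℝ) + ξ + η + 2 ≠ 0 := by push_cast; nlinarith
      push_cast at hden hne1 ⊢
      push_cast at hd2
      rw [eq_div_iff (mul_ne_zero hden hne1)]
      have hx : (η - ξ) / (0 + ξ + η + 2) * (0 + ξ + η + 2) = η - ξ :=
        div_mul_cancel₀ _ hd2
      linear_combination (2 * (1 + ξ + η)) * hx
  · have hn2 : (2 : ℝ) ≤ (n : ℝ) := by exact_mod_cast h2
    constructor
    · intro he
      obtain ⟨k, hk⟩ := he
      have h1 : a ((n : ℤ) - 1) = -(1 + ξ + η) / (((n : ℤ) - 1 : ℤ) + ξ + η + 2) :=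
        hao _ (by omega) ⟨(k : ℤ) - 1, by push_cast [hk]; ring⟩
      have h2' : a ((n : ℤ) - 2) = (η - ξ) / (((n : ℤ) - 2 : ℤ) + ξ + η + 2) :=
        hae _ (by omega) ⟨(k : ℤ) - 1, by push_cast [hk]; ring⟩
      push_cast at h1 h2'
      rw [h1, h2',
        show (n : ℝ) - 1 + ξ + η + 2 = (n : ℝ) + ξ + η + 1 by ring,
        show (n : ℝ) - 2 + ξ + η + 2 = (n : ℝ) + ξ + η by ring]
      field_simp
      ring
    · intro ho
      obtain ⟨k, hk⟩ := ho
      have h1 : a ((n : ℤ) - 1) = (η - ξ) / (((n : ℤ) - 1 : ℤ) + ξ + η + 2) :=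
        hae _ (by omega) ⟨(k : ℤ), by push_cast [hk]; ring⟩
      have h2' : a ((n : ℤ) - 2) = -(1 + ξ + η) / (((n : ℤ) - 2 : ℤ) + ξ + η + 2) :=
        hao _ (by omega) ⟨(k : ℤ) - 1, by push_cast [hk]; ring⟩
      push_cast at h1 h2'
      rw [h1, h2',
        show (n : ℝ) - 1 + ξ + η + 2 = (n : ℝ) + ξ + η + 1 by ring,
        show (n : ℝ) - 2 + ξ + η + 2 = (n : ℝ) + ξ + η by ring]
      field_simp
      ring
end

section
/- Let λ > 0. Define monic polynomials Q_n by Q_0 = 1, Q_1(x) = x - λ, and Q_{n+1}(x) = x Q_n(x) - u_n Q_{n-1}(x) for n ≥ 1, where u_n = λ² if n is even and u_n = 1 if n is odd. Let E = [-λ-1, -|λ-1|] ∪ [|λ-1|, λ+1] and define the weight w on E by w(t) = sign(t) · sqrt(4λ² - (t² - λ² - 1)²) / ( -λ (t - λ - 1)(t - λ + 1) ). Then w(t) ≥ 0 for all t in E, and for all integers n ≠ m one has ∫_E Q_n(t) Q_m(t) w(t) dt = 0; i.e. the polynomials Q_n are orthogonal on the union of the two intervals E with respect to the weight w. -/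
open MeasureTheory
open Set

def dgE (n : ℕ) : ℤ := if n % 2 = 0 then -((n / 2 : ℕ) : ℤ) else ((n / 2 : ℕ) : ℤ) + 1

lemma dgE_inj {n m : ℕ} (h : dgE n = dgE m) : n = m := by
  unfold dgE at h
  rcases Nat.mod_two_eq_zero_or_one n with hn | hn <;>
    rcases Nat.mod_two_eq_zero_or_one m with hm | hm <;>
    simp only [hn, hm] at h <;> norm_num at h <;> omega

lemma sin_rec (y θ : ℝ) :
    Real.sin (y + 2 * θ) = 2 * Real.cos θ * Real.sin (y + θ) - Real.sin y := by
  rw [show y + 2*θ = (y+θ) + θ by ring, Real.sin_add]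
  have h2' := Real.sin_sub (y+θ) θ
  rw [add_sub_cancel_right] at h2'
  linear_combination h2'


lemma trigKey (θ α β : ℝ) :
    Real.sin α * Real.sin β
      - Real.cos θ * (Real.sin α * Real.sin (β - θ) + Real.sin β * Real.sin (α - θ))
      + Real.sin (α - θ) * Real.sin (β - θ) = Real.sin θ ^ 2 * Real.cos (α - β) := by
  rw [Real.sin_sub, Real.sin_sub, Real.cos_sub]
  linear_combination (-(Real.sin α * Real.sin β)) * Real.sin_sq_add_cos_sq θ

lemma keyIdentity (lam t θ α β : ℝ) (hlam : lam ≠ 0) (hs : Real.sin θ ≠ 0)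
    (ht : t^2 = lam^2 + 1 + 2*lam*Real.cos θ)
    (hD1 : (lam+1-t)*(t-lam+1) ≠ 0) (hD2 : (t+lam+1)*(t+lam-1) ≠ 0) :
    (t*Real.sin α - (lam*Real.sin α + Real.sin (α-θ)))
        * (t*Real.sin β - (lam*Real.sin β + Real.sin (β-θ)))
        * (2*Real.sin θ/((lam+1-t)*(t-lam+1)))
      + (t*Real.sin α + (lam*Real.sin α + Real.sin (α-θ)))
        * (t*Real.sin β + (lam*Real.sin β + Real.sin (β-θ)))
        * (2*Real.sin θ/((t+lam+1)*(t+lam-1)))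
      = 2*t*Real.sin θ*Real.cos (α-β)/lam := by
  set Sa := Real.sin α
  set Sb := Real.sin β
  set Ya := lam*Real.sin α + Real.sin (α-θ)
  set Yb := lam*Real.sin β + Real.sin (β-θ)
  have hG : t^2*Sa*Sb + Ya*Yb - (Real.cos θ + lam)*(Sa*Yb + Sb*Ya)
      = Real.sin θ^2 * Real.cos (α-β) := by
    simp only [Sa, Sb, Ya, Yb]
    linear_combination Real.sin α * Real.sin β * ht + trigKey θ α β
  have hD12 : ((lam+1-t)*(t-lam+1))*((t+lam+1)*(t+lam-1))
      = 4*lam^2*(Real.sin θ)^2 := by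
    linear_combination (2*lam^2 + 2 - t^2 - (lam^2+1+2*lam*Real.cos θ)) * ht
      - 4*lam^2 * (Real.sin_sq_add_cos_sq θ)
  have hnum : (t*Sa - Ya)*(t*Sb - Yb)*((t+lam+1)*(t+lam-1))
      + (t*Sa + Ya)*(t*Sb + Yb)*((lam+1-t)*(t-lam+1))
      = 4*lam*t*(Real.sin θ^2 * Real.cos (α-β)) := by
    linear_combination 4*lam*t*hG - 2*t*(Sa*Yb + Sb*Ya)*ht
  rw [mul_div_assoc', mul_div_assoc', div_add_div _ _ hD1 hD2, div_eq_div_iff (mul_ne_zero hD1 hD2) hlam]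
  linear_combination 2*Real.sin θ*lam*hnum - 2*t*Real.sin θ*Real.cos (α-β)*hD12

section CF
variable (lam : ℝ) (u : ℕ → ℝ) (hu : ∀ n : ℕ, u n = if Even n then lam ^ 2 else 1)
  (Q : ℕ → ℝ → ℝ)
  (hQ0 : ∀ x : ℝ, Q 0 x = 1) (hQ1 : ∀ x : ℝ, Q 1 x = x - lam)
  (hQ : ∀ n : ℕ, 1 ≤ n → ∀ x : ℝ, Q (n + 1) x = x * Q n x - u n * Q (n - 1) x)

include hu hQ0 hQ1 hQ in
lemma cf (θ t : ℝ) (ht : t^2 = lam^2 + 1 + 2*lam*Real.cos θ) : ∀ k : ℕ,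
    Real.sin θ * Q (2*k) t
      = lam^k * (lam * Real.sin (k*θ) + Real.sin ((k+1)*θ) - t * Real.sin (k*θ))
    ∧ Real.sin θ * Q (2*k+1) t
      = lam^k * (t * Real.sin ((k+1)*θ) - lam * Real.sin ((k+1)*θ) - Real.sin (k*θ)) := by
  intro k
  induction k with
  | zero => simp [hQ0, hQ1]; ring
  | succ k ih =>
    obtain ⟨ihE, ihO⟩ := ih
    have hrec1 : Q (2*k+1+1) t = t * Q (2*k+1) t - u (2*k+1) * Q (2*k) t := by
      have := hQ (2*k+1) (by omega) t
      simpa using this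
    have hu1 : u (2*k+1) = 1 := by
      rw [hu]; simp [Nat.even_add_one, Nat.even_mul]
    have hs2k : Real.sin (((k:ℝ)+2)*θ)
        = 2 * Real.cos θ * Real.sin (((k:ℝ)+1)*θ) - Real.sin ((k:ℝ)*θ) := by
      have := sin_rec ((k:ℝ)*θ) θ
      rw [show (k:ℝ)*θ + 2*θ = ((k:ℝ)+2)*θ by ring, show (k:ℝ)*θ + θ = ((k:ℝ)+1)*θ by ring] at this
      exact this
    have hE' : Real.sin θ * Q (2*(k+1)) t
        = lam^(k+1) * (lam * Real.sin ((k+1)*θ) + Real.sin ((k+2)*θ)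
            - t * Real.sin ((k+1)*θ)) := by
      have hidx : 2*(k+1) = 2*k+1+1 := by ring
      rw [hidx, hrec1, hu1]
      push_cast
      rw [hs2k]
      linear_combination t * ihO - ihE + (lam^k * Real.sin (((k:ℝ)+1)*θ)) * ht
    rw [hs2k] at hE'
    have hs2' : Real.sin (((k:ℝ)+1+1)*θ)
        = 2 * Real.cos θ * Real.sin (((k:ℝ)+1)*θ) - Real.sin ((k:ℝ)*θ) := by
      have := sin_rec ((k:ℝ)*θ) θ
      rw [show (k:ℝ)*θ + 2*θ = ((k:ℝ)+1+1)*θ by ring, show (k:ℝ)*θ + θ = ((k:ℝ)+1)*θ by ring] at this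
      exact this
    refine ⟨by push_cast; rw [hs2']; linear_combination hE', ?_⟩
    have hrec2 : Q (2*(k+1)+1) t = t * Q (2*(k+1)) t - u (2*(k+1)) * Q (2*k+1) t := by
      have := hQ (2*(k+1)) (by omega) t
      simpa [show 2*(k+1)-1 = 2*k+1 by omega] using this
    have hu2 : u (2*(k+1)) = lam^2 := by rw [hu]; simp [Nat.even_mul]
    rw [hrec2, hu2]
    push_cast
    push_cast at ihO
    rw [hs2']
    linear_combination t * hE' - lam^2 * ihO - (lam^(k+1) * Real.sin (((k:ℝ)+1)*θ)) * ht


include hu hQ0 hQ1 hQ in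
lemma cfU (θ t : ℝ) (ht : t^2 = lam^2 + 1 + 2*lam*Real.cos θ) (n : ℕ) :
    Real.sin θ * Q n t
      = lam^(n/2) * (t * Real.sin ((dgE n : ℝ)*θ) - lam * Real.sin ((dgE n : ℝ)*θ)
          - Real.sin ((dgE n : ℝ)*θ - θ)) := by
  rcases Nat.even_or_odd n with hn | hn
  · have hn2 : n % 2 = 0 := Nat.even_iff.mp hn
    have hk : n = 2*(n/2) := by omega
    set k := n/2 with hkdef
    have hd : dgE n = -(k:ℤ) := by
      unfold dgE; rw [if_pos (Nat.even_iff.mp hn)]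
    rw [hd]
    push_cast
    rw [show (-(k:ℝ))*θ = -((k:ℝ)*θ) by ring, Real.sin_neg,
      show -((k:ℝ)*θ) - θ = -(((k:ℝ)+1)*θ) by ring, Real.sin_neg]
    have := (cf lam u hu Q hQ0 hQ1 hQ θ t ht k).1
    rw [← hk] at this
    linear_combination this
  · have hn2 : n % 2 = 1 := Nat.odd_iff.mp hn
    have hk : n = 2*(n/2)+1 := by omega
    set k := n/2 with hkdef
    have hd : dgE n = (k:ℤ)+1 := by
      unfold dgE; rw [if_neg (by omega : ¬ n % 2 = 0)]
    rw [hd]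
    push_cast
    rw [show ((k:ℝ)+1)*θ - θ = (k:ℝ)*θ by ring]
    have := (cf lam u hu Q hQ0 hQ1 hQ θ t ht k).2
    rw [← hk] at this
    linear_combination this

end CF

noncomputable def wfun (lam t : ℝ) : ℝ :=
  Real.sign t * Real.sqrt (4 * lam ^ 2 - (t ^ 2 - lam ^ 2 - 1) ^ 2) /
    (-lam * (t - lam - 1) * (t - lam + 1))

section W
variable {lam : ℝ} (hlam : 0 < lam) {t : ℝ} (h1 : |lam - 1| < t) (h2 : t < lam + 1)

include hlam h1 h2

lemma tpos : 0 < t := lt_of_le_of_lt (abs_nonneg _) h1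

lemma hD1pos : 0 < (lam+1-t)*(t-lam+1) := by
  have ha : lam - 1 ≤ |lam - 1| := le_abs_self _
  have : 0 < t - lam + 1 := by linarith
  have : 0 < lam + 1 - t := by linarith
  positivity

lemma hD2pos : 0 < (t+lam+1)*(t+lam-1) := by
  have ha : -(lam - 1) ≤ |lam - 1| := neg_le_abs _
  have h0 : 0 < t := tpos hlam h1 h2
  have : 0 < t + lam - 1 := by linarith
  have : 0 < t + lam + 1 := by linarith
  positivity

lemma wfun_pos_eq :
    wfun lam t = Real.sqrt ((t+lam+1)*(t+lam-1)) / (lam * Real.sqrt ((lam+1-t)*(t-lam+1))) := by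
  have h0 : 0 < t := tpos hlam h1 h2
  have hd1 : 0 < (lam+1-t)*(t-lam+1) := hD1pos hlam h1 h2
  have hd2 : 0 < (t+lam+1)*(t+lam-1) := hD2pos hlam h1 h2
  have hsq : 4 * lam ^ 2 - (t ^ 2 - lam ^ 2 - 1) ^ 2
      = ((lam+1-t)*(t-lam+1)) * ((t+lam+1)*(t+lam-1)) := by ring
  rw [wfun, Real.sign_of_pos h0, hsq, Real.sqrt_mul hd1.le]
  rw [div_eq_div_iff (by nlinarith [Real.sqrt_pos.mpr hd1, Real.sqrt_pos.mpr hd2] : 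
        (-lam * (t - lam - 1) * (t - lam + 1)) ≠ 0)
      (by positivity : lam * Real.sqrt ((lam+1-t)*(t-lam+1)) ≠ 0)]
  have hss := Real.mul_self_sqrt hd1.le
  linear_combination (lam * Real.sqrt ((t+lam+1)*(t+lam-1))) * hss

lemma wfun_neg_eq :
    wfun lam (-t) = Real.sqrt ((lam+1-t)*(t-lam+1)) / (lam * Real.sqrt ((t+lam+1)*(t+lam-1))) := by
  have h0 : 0 < t := tpos hlam h1 h2
  have hd1 : 0 < (lam+1-t)*(t-lam+1) := hD1pos hlam h1 h2
  have hd2 : 0 < (t+lam+1)*(t+lam-1) := hD2pos hlam h1 h2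
  have hsq : 4 * lam ^ 2 - ((-t) ^ 2 - lam ^ 2 - 1) ^ 2
      = ((lam+1-t)*(t-lam+1)) * ((t+lam+1)*(t+lam-1)) := by ring
  rw [wfun, Real.sign_of_neg (by linarith), hsq, Real.sqrt_mul hd1.le]
  rw [div_eq_div_iff (by nlinarith [Real.sqrt_pos.mpr hd1, Real.sqrt_pos.mpr hd2] :
        (-lam * (-t - lam - 1) * (-t - lam + 1)) ≠ 0)
      (by positivity : lam * Real.sqrt ((t+lam+1)*(t+lam-1)) ≠ 0)]
  have hss := Real.mul_self_sqrt hd2.le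
  linear_combination (-(lam * Real.sqrt ((lam+1-t)*(t-lam+1)))) * hss

end W

section Main
variable {lam : ℝ} (hlam : 0 < lam) (u : ℕ → ℝ) (hu : ∀ n : ℕ, u n = if Even n then lam ^ 2 else 1)
  (Q : ℕ → ℝ → ℝ)
  (hQ0 : ∀ x : ℝ, Q 0 x = 1) (hQ1 : ∀ x : ℝ, Q 1 x = x - lam)
  (hQ : ∀ n : ℕ, 1 ≤ n → ∀ x : ℝ, Q (n + 1) x = x * Q n x - u n * Q (n - 1) x)

include hlam hu hQ0 hQ1 hQ in
set_option maxHeartbeats 2000000 in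
lemma sumEq (n m : ℕ) {t : ℝ} (h1 : |lam - 1| < t) (h2 : t < lam + 1) :
    Q n t * Q m t * wfun lam t + Q n (-t) * Q m (-t) * wfun lam (-t)
      = 2 * lam ^ (n/2 + m/2) * t *
          Real.cos (((dgE n - dgE m : ℤ) : ℝ) * Real.arccos ((t^2 - lam^2 - 1)/(2*lam)))
          / (lam * Real.sin (Real.arccos ((t^2 - lam^2 - 1)/(2*lam)))) := by
  have h0 : 0 < t := tpos hlam h1 h2
  set c : ℝ := (t^2 - lam^2 - 1)/(2*lam) with hcdef
  have hd1 : 0 < (lam+1-t)*(t-lam+1) := hD1pos hlam h1 h2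
  have hd2 : 0 < (t+lam+1)*(t+lam-1) := hD2pos hlam h1 h2
  have habs : (lam-1)^2 < t^2 := by
    have h3 : 0 < t - |lam-1| := by linarith
    have h4 : 0 < t + |lam-1| := by positivity
    nlinarith [mul_pos h3 h4, sq_abs (lam-1)]
  have hc1 : -1 < c := by
    rw [hcdef, lt_div_iff₀ (by positivity)]; nlinarith
  have hc2 : c < 1 := by
    rw [hcdef, div_lt_iff₀ (by positivity)]; nlinarith
  set θ := Real.arccos c with hθdef
  have hcos : Real.cos θ = c := Real.cos_arccos hc1.le hc2.le
  have hsin : Real.sin θ = Real.sqrt (1 - c^2) := Real.sin_arccos c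
  have hsinpos : 0 < Real.sin θ := by
    rw [hsin]; apply Real.sqrt_pos.mpr; nlinarith
  have hsne : Real.sin θ ≠ 0 := ne_of_gt hsinpos
  have hs2 : Real.sin θ ^ 2 = 1 - c^2 := by
    rw [hsin]; exact Real.sq_sqrt (by nlinarith)
  have ht2 : t^2 = lam^2 + 1 + 2*lam*Real.cos θ := by
    rw [hcos, hcdef]; field_simp; ring
  have ht2' : (-t)^2 = lam^2 + 1 + 2*lam*Real.cos θ := by rw [neg_sq]; exact ht2
  -- w values
  have hwsqrt : 4 * lam ^ 2 - (t ^ 2 - lam ^ 2 - 1) ^ 2 = (2*lam*Real.sin θ)^2 := by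
    have : t ^ 2 - lam ^ 2 - 1 = 2*lam*c := by rw [hcdef]; field_simp
    rw [this]; nlinarith [hs2]
  have hw1 : wfun lam t = 2 * Real.sin θ / ((lam+1-t)*(t-lam+1)) := by
    rw [wfun, Real.sign_of_pos h0, hwsqrt, Real.sqrt_sq (by positivity)]
    rw [div_eq_div_iff (by nlinarith : (-lam * (t - lam - 1) * (t - lam + 1)) ≠ 0)
      (ne_of_gt hd1)]
    ring
  have hw2 : wfun lam (-t) = 2 * Real.sin θ / ((t+lam+1)*(t+lam-1)) := by
    have hwsqrt' : 4 * lam ^ 2 - ((-t) ^ 2 - lam ^ 2 - 1) ^ 2 = (2*lam*Real.sin θ)^2 := by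
      rw [neg_sq]; exact hwsqrt
    rw [wfun, Real.sign_of_neg (by linarith), hwsqrt', Real.sqrt_sq (by positivity)]
    rw [div_eq_div_iff (by nlinarith : (-lam * (-t - lam - 1) * (-t - lam + 1)) ≠ 0)
      (ne_of_gt hd2)]
    ring
  -- closed forms
  set α : ℝ := ((dgE n : ℤ) : ℝ) * θ with hα
  set β : ℝ := ((dgE m : ℤ) : ℝ) * θ with hβ
  have hQnt : Q n t = lam^(n/2) * (t * Real.sin α - lam * Real.sin α - Real.sin (α - θ))
      / Real.sin θ := by
    rw [eq_div_iff hsne]; linear_combination cfU lam u hu Q hQ0 hQ1 hQ θ t ht2 n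
  have hQmt : Q m t = lam^(m/2) * (t * Real.sin β - lam * Real.sin β - Real.sin (β - θ))
      / Real.sin θ := by
    rw [eq_div_iff hsne]; linear_combination cfU lam u hu Q hQ0 hQ1 hQ θ t ht2 m
  have hQnt' : Q n (-t) = lam^(n/2) * (-t * Real.sin α - lam * Real.sin α - Real.sin (α - θ))
      / Real.sin θ := by
    rw [eq_div_iff hsne]; linear_combination cfU lam u hu Q hQ0 hQ1 hQ θ (-t) ht2' n
  have hQmt' : Q m (-t) = lam^(m/2) * (-t * Real.sin β - lam * Real.sin β - Real.sin (β - θ))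
      / Real.sin θ := by
    rw [eq_div_iff hsne]; linear_combination cfU lam u hu Q hQ0 hQ1 hQ θ (-t) ht2' m
  have KI := keyIdentity lam t θ α β (ne_of_gt hlam) hsne ht2 (ne_of_gt hd1) (ne_of_gt hd2)
  have hcosd : Real.cos (α - β) = Real.cos (((dgE n - dgE m : ℤ) : ℝ) * θ) := by
    congr 1; push_cast [hα, hβ]; ring
  rw [hQnt, hQmt, hQnt', hQmt', hw1, hw2, ← hcosd, pow_add]
  have hstep : lam ^ (n / 2) * (t * Real.sin α - lam * Real.sin α - Real.sin (α - θ)) / Real.sin θ *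
        (lam ^ (m / 2) * (t * Real.sin β - lam * Real.sin β - Real.sin (β - θ)) / Real.sin θ) *
        (2 * Real.sin θ / ((lam + 1 - t) * (t - lam + 1))) +
      lam ^ (n / 2) * (-t * Real.sin α - lam * Real.sin α - Real.sin (α - θ)) / Real.sin θ *
        (lam ^ (m / 2) * (-t * Real.sin β - lam * Real.sin β - Real.sin (β - θ)) / Real.sin θ) *
        (2 * Real.sin θ / ((t + lam + 1) * (t + lam - 1)))
      = lam ^ (n / 2) * lam ^ (m / 2) / Real.sin θ ^ 2 *
        ((t*Real.sin α - (lam*Real.sin α + Real.sin (α-θ)))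
            * (t*Real.sin β - (lam*Real.sin β + Real.sin (β-θ)))
            * (2*Real.sin θ/((lam+1-t)*(t-lam+1)))
          + (t*Real.sin α + (lam*Real.sin α + Real.sin (α-θ)))
            * (t*Real.sin β + (lam*Real.sin β + Real.sin (β-θ)))
            * (2*Real.sin θ/((t+lam+1)*(t+lam-1)))) := by
    field_simp
    ring
  rw [hstep, KI]
  field_simp
end Main

section Deriv
variable {lam : ℝ} (hlam : 0 < lam) (u : ℕ → ℝ) (hu : ∀ n : ℕ, u n = if Even n then lam ^ 2 else 1)
  (Q : ℕ → ℝ → ℝ)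
  (hQ0 : ∀ x : ℝ, Q 0 x = 1) (hQ1 : ∀ x : ℝ, Q 1 x = x - lam)
  (hQ : ∀ n : ℕ, 1 ≤ n → ∀ x : ℝ, Q (n + 1) x = x * Q n x - u n * Q (n - 1) x)

include hlam hu hQ0 hQ1 hQ in
lemma hasDerivH (n m : ℕ) (hnm : n ≠ m) {t : ℝ} (h1 : |lam - 1| < t) (h2 : t < lam + 1) :
    HasDerivAt (fun y : ℝ =>
        -(2 * lam ^ (n/2 + m/2) / ((dgE n - dgE m : ℤ) : ℝ)) *
          Real.sin (((dgE n - dgE m : ℤ) : ℝ) * Real.arccos ((y^2 - lam^2 - 1)/(2*lam))))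
      (Q n t * Q m t * wfun lam t + Q n (-t) * Q m (-t) * wfun lam (-t)) t := by
  have h0 : 0 < t := tpos hlam h1 h2
  set d : ℝ := ((dgE n - dgE m : ℤ) : ℝ) with hddef
  have hd : d ≠ 0 := by
    rw [hddef]
    exact_mod_cast sub_ne_zero.mpr (fun h => hnm (dgE_inj h))
  set c : ℝ := (t^2 - lam^2 - 1)/(2*lam) with hcdef
  have habs : (lam-1)^2 < t^2 := by
    have h3 : 0 < t - |lam-1| := by linarith
    have h4 : 0 < t + |lam-1| := by positivity
    nlinarith [mul_pos h3 h4, sq_abs (lam-1)]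
  have hc1 : -1 < c := by
    rw [hcdef, lt_div_iff₀ (by positivity)]; nlinarith
  have hc2 : c < 1 := by
    rw [hcdef, div_lt_iff₀ (by positivity)]; nlinarith
  have hsq : 0 < Real.sqrt (1 - c^2) := Real.sqrt_pos.mpr (by nlinarith)
  have hder1 : HasDerivAt (fun y : ℝ => (y^2 - lam^2 - 1)/(2*lam)) (t/lam) t := by
    have h := (((hasDerivAt_pow 2 t).sub_const (lam^2)).sub_const 1).div_const (2*lam)
    convert h using 1
    · rfl
    · rfl
    field_simp
    ring
  have hder2 := (Real.hasDerivAt_arccos hc1.ne' hc2.ne).comp t hder1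
  have hder3 := hder2.const_mul d
  have hder4 := (Real.hasDerivAt_sin (d * Real.arccos c)).comp t hder3
  have hder5 := hder4.const_mul (-(2 * lam ^ (n/2 + m/2) / d))
  have heq := sumEq hlam u hu Q hQ0 hQ1 hQ n m h1 h2
  rw [← hcdef, ← hddef] at heq
  have hsin : Real.sin (Real.arccos c) = Real.sqrt (1 - c^2) := Real.sin_arccos c
  rw [heq, hsin]
  have hlam' : lam ≠ 0 := ne_of_gt hlam
  have hS : Real.sqrt (1 - c^2) ≠ 0 := ne_of_gt hsq
  convert hder5 using 1
  · rfl
  · rfl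
  · rfl
  generalize Real.cos (d * Real.arccos c) = CC
  field_simp
end Deriv

section Cont
variable {lam : ℝ} (u : ℕ → ℝ)
  (Q : ℕ → ℝ → ℝ)
  (hQ0 : ∀ x : ℝ, Q 0 x = 1) (hQ1 : ∀ x : ℝ, Q 1 x = x - lam)
  (hQ : ∀ n : ℕ, 1 ≤ n → ∀ x : ℝ, Q (n + 1) x = x * Q n x - u n * Q (n - 1) x)

include hQ0 hQ1 hQ in
lemma contQ : ∀ n, Continuous (Q n) := by
  have key : ∀ n, Continuous (Q n) ∧ Continuous (Q (n+1)) := by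
    intro n
    induction n with
    | zero =>
      constructor
      · have : Q 0 = fun _ : ℝ => 1 := funext hQ0
        rw [this]; exact continuous_const
      · have : Q 1 = fun x : ℝ => x - lam := funext hQ1
        rw [this]; exact continuous_id.sub continuous_const
    | succ n ih =>
      refine ⟨ih.2, ?_⟩
      have : Q (n+1+1) = fun x => x * Q (n+1) x - u (n+1) * Q n x := by
        funext x
        rw [hQ (n+1) (by omega) x]
        simp
      rw [this]
      exact (continuous_id.mul ih.2).sub (continuous_const.mul ih.1)
  exact fun n => (key n).1
end Cont

section Integrability
open Set MeasureTheory
variable {lam : ℝ} (hlam : 0 < lam)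

include hlam in
lemma hab : |lam - 1| < lam + 1 := by
  rw [abs_lt]; constructor <;> linarith

lemma rpow_inv_sqrt {x : ℝ} (hx : 0 < x) : x ^ (-(1/2) : ℝ) = (Real.sqrt x)⁻¹ := by
  rw [Real.sqrt_eq_rpow, ← Real.rpow_neg hx.le]

include hlam in
lemma wfun_bound_pos {t : ℝ} (h1 : |lam - 1| < t) (h2 : t < lam + 1) :
    wfun lam t ≤ (Real.sqrt ((2*lam+2)*(2*lam)) / lam) *
      ((lam + 1 - t) ^ (-(1/2) : ℝ) + (t - (lam - 1)) ^ (-(1/2) : ℝ)) := by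
  have h0 : 0 < t := tpos hlam h1 h2
  have ha1 : lam - 1 ≤ |lam-1| := le_abs_self _
  have hx1 : 0 < lam + 1 - t := by linarith
  have hx2 : 0 < t - (lam - 1) := by linarith
  rw [wfun_pos_eq hlam h1 h2, rpow_inv_sqrt hx1, rpow_inv_sqrt hx2,
    show (lam+1-t)*(t-lam+1) = (lam+1-t)*(t-(lam-1)) by ring, Real.sqrt_mul hx1.le]
  set B1 := Real.sqrt (lam+1-t)
  set B2 := Real.sqrt (t-(lam-1))
  set N := Real.sqrt ((2*lam+2)*(2*lam)) with hN
  have hs1 : 0 < B1 := Real.sqrt_pos.mpr hx1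
  have hs2 : 0 < B2 := Real.sqrt_pos.mpr hx2
  have hNpos : 0 ≤ N := Real.sqrt_nonneg _
  have hA : Real.sqrt ((t+lam+1)*(t+lam-1)) ≤ N := by
    apply Real.sqrt_le_sqrt; nlinarith
  have hB1 : B1^2 = lam + 1 - t := Real.sq_sqrt hx1.le
  have hB2 : B2^2 = t - (lam-1) := Real.sq_sqrt hx2.le
  have hsum : 1 ≤ B1 + B2 := by nlinarith [mul_nonneg hs1.le hs2.le]
  calc Real.sqrt ((t+lam+1)*(t+lam-1)) / (lam * (B1 * B2))
      ≤ (N * (B1 + B2)) / (lam * (B1 * B2)) := by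
        have hnum : Real.sqrt ((t+lam+1)*(t+lam-1)) ≤ N * (B1 + B2) := by nlinarith
        exact (div_le_div_iff_of_pos_right (by positivity)).mpr hnum
    _ = N / lam * (B1⁻¹ + B2⁻¹) := by
        field_simp
        ring_nf
        try exact Or.inl trivial

include hlam in
lemma wfun_bound_neg {t : ℝ} (h1 : |lam - 1| < t) (h2 : t < lam + 1) :
    wfun lam (-t) ≤ (2 / lam) * (t - (1 - lam)) ^ (-(1/2) : ℝ) := by
  have h0 : 0 < t := tpos hlam h1 h2
  have ha1 : lam - 1 ≤ |lam-1| := le_abs_self _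
  have ha2 : -(lam-1) ≤ |lam-1| := neg_le_abs _
  have hx1 : 0 < lam + 1 - t := by linarith
  have hx2 : 0 < t - (lam - 1) := by linarith
  have hy : 0 < t + lam - 1 := by linarith
  have hy1 : (1:ℝ) ≤ t + lam + 1 := by linarith
  rw [wfun_neg_eq hlam h1 h2, rpow_inv_sqrt (show (0:ℝ) < t - (1-lam) by linarith)]
  have hsplit : Real.sqrt ((t+lam+1)*(t+lam-1))
      = Real.sqrt (t+lam+1) * Real.sqrt (t+lam-1) := Real.sqrt_mul (by linarith) _
  have hnum : Real.sqrt ((lam+1-t)*(t-lam+1)) ≤ 2 := by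
    rw [show (2:ℝ) = Real.sqrt 4 by rw [show (4:ℝ) = 2^2 by norm_num, Real.sqrt_sq]; norm_num]
    apply Real.sqrt_le_sqrt; nlinarith
  have hden : Real.sqrt (t - (1-lam)) ≤ Real.sqrt ((t+lam+1)*(t+lam-1)) := by
    rw [hsplit, show t - (1-lam) = t + lam - 1 by ring]
    nlinarith [Real.sqrt_nonneg (t+lam-1), Real.one_le_sqrt.mpr hy1, Real.sqrt_nonneg (t+lam+1)]
  have hdpos : 0 < Real.sqrt ((t+lam+1)*(t+lam-1)) :=
    Real.sqrt_pos.mpr (by nlinarith)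
  have hd2pos : 0 < Real.sqrt (t - (1-lam)) :=
    Real.sqrt_pos.mpr (by linarith)
  rw [div_le_iff₀ (by positivity)]
  have expand : 2 / lam * (Real.sqrt (t - (1-lam)))⁻¹ * (lam * Real.sqrt ((t+lam+1)*(t+lam-1)))
      = 2 * (Real.sqrt ((t+lam+1)*(t+lam-1)) / Real.sqrt (t - (1-lam))) := by
    field_simp
  rw [expand]
  have hratio : (1:ℝ) ≤ Real.sqrt ((t+lam+1)*(t+lam-1)) / Real.sqrt (t - (1-lam)) :=
    (one_le_div hd2pos).mpr hden
  nlinarith [Real.sqrt_nonneg ((lam+1-t)*(t-lam+1))]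

lemma gInt1 : IntervalIntegrable (fun t : ℝ => (lam + 1 - t) ^ (-(1/2) : ℝ))
    volume (|lam-1|) (lam+1) := by
  have hbase : IntervalIntegrable (fun x : ℝ => x ^ (-(1/2) : ℝ)) volume
      ((lam+1) - |lam-1|) ((lam+1) - (lam+1)) := intervalIntegral.intervalIntegrable_rpow' (by norm_num)
  have := hbase.comp_sub_left (lam+1)
  simpa using this

lemma gInt2 (c : ℝ) : IntervalIntegrable (fun t : ℝ => (t - c) ^ (-(1/2) : ℝ))
    volume (|lam-1|) (lam+1) := by
  have hbase : IntervalIntegrable (fun x : ℝ => x ^ (-(1/2) : ℝ)) volume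
      (|lam-1| - c) ((lam+1) - c) := intervalIntegral.intervalIntegrable_rpow' (by norm_num)
  have := hbase.comp_sub_right c
  simpa using this

include hlam in
lemma integrable_pos (f : ℝ → ℝ) (hf : Continuous f) :
    IntervalIntegrable (fun t => f t * wfun lam t) volume (|lam-1|) (lam+1) := by
  have hab' : |lam-1| ≤ lam + 1 := (hab hlam).le
  obtain ⟨M, hM⟩ := isCompact_Icc.exists_bound_of_continuousOn
    (s := Icc (-(lam+1)) (lam+1)) hf.continuousOn
  have hM0 : 0 ≤ M := le_trans (norm_nonneg _) (hM (lam+1) ⟨by linarith, le_refl _⟩)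
  set N := Real.sqrt ((2*lam+2)*(2*lam)) with hN
  set g : ℝ → ℝ := fun t => M * ((N/lam) *
    ((lam + 1 - t) ^ (-(1/2) : ℝ) + (t - (lam - 1)) ^ (-(1/2) : ℝ))) with hg
  have hgInt : IntervalIntegrable g volume (|lam-1|) (lam+1) := by
    exact (((gInt1 (lam := lam)).add (gInt2 (lam := lam) (lam-1))).const_mul (N/lam)).const_mul M
  rw [intervalIntegrable_iff_integrableOn_Ioo_of_le hab']
  apply Integrable.mono' ((intervalIntegrable_iff_integrableOn_Ioo_of_le hab').mp hgInt)
  · -- measurability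
    apply ContinuousOn.aestronglyMeasurable ?_ measurableSet_Ioo
    apply ContinuousOn.mul hf.continuousOn
    apply ContinuousOn.congr
      (f := fun t => Real.sqrt (4 * lam ^ 2 - (t ^ 2 - lam ^ 2 - 1) ^ 2) /
        (-lam * (t - lam - 1) * (t - lam + 1)))
    · apply ContinuousOn.div
      · fun_prop
      · fun_prop
      · intro t ht
        obtain ⟨ht1, ht2⟩ := ht
        have h0 : 0 < t := tpos hlam ht1 ht2
        have ha1 : lam - 1 ≤ |lam-1| := le_abs_self _
        have hA : 0 < t - lam + 1 := by linarith
        have hB : 0 < lam * (lam + 1 - t) := mul_pos hlam (by linarith)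
        nlinarith [mul_pos hB hA]
    · intro t ht
      obtain ⟨ht1, ht2⟩ := ht
      have h0 : 0 < t := tpos hlam ht1 ht2
      rw [wfun, Real.sign_of_pos h0, one_mul]
  · -- bound
    rw [ae_restrict_iff' measurableSet_Ioo]
    apply ae_of_all
    intro t ht
    obtain ⟨ht1, ht2⟩ := ht
    have h0 : 0 < t := tpos hlam ht1 ht2
    have hwpos : 0 ≤ wfun lam t := by
      rw [wfun_pos_eq hlam ht1 ht2]; positivity
    have hfb : |f t| ≤ M := hM t ⟨by linarith, ht2.le⟩
    have hwb := wfun_bound_pos hlam ht1 ht2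
    calc ‖f t * wfun lam t‖ = |f t| * wfun lam t := by
          rw [norm_mul, Real.norm_eq_abs, Real.norm_eq_abs, abs_of_nonneg hwpos]
      _ ≤ M * ((N/lam) * ((lam + 1 - t) ^ (-(1/2) : ℝ) + (t - (lam - 1)) ^ (-(1/2) : ℝ))) := by
          apply mul_le_mul hfb ?_ hwpos hM0
          calc wfun lam t ≤ N / lam * ((lam + 1 - t) ^ (-(1/2) : ℝ) + (t - (lam - 1)) ^ (-(1/2) : ℝ)) := hwb
            _ = _ := by ring
      _ = g t := rfl

include hlam in
lemma integrable_neg (f : ℝ → ℝ) (hf : Continuous f) :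
    IntervalIntegrable (fun t => f (-t) * wfun lam (-t)) volume (|lam-1|) (lam+1) := by
  have hab' : |lam-1| ≤ lam + 1 := (hab hlam).le
  obtain ⟨M, hM⟩ := isCompact_Icc.exists_bound_of_continuousOn
    (s := Icc (-(lam+1)) (lam+1)) hf.continuousOn
  have hM0 : 0 ≤ M := le_trans (norm_nonneg _) (hM (lam+1) ⟨by linarith, le_refl _⟩)
  set g : ℝ → ℝ := fun t => M * ((2/lam) * (t - (1 - lam)) ^ (-(1/2) : ℝ)) with hg
  have hgInt : IntervalIntegrable g volume (|lam-1|) (lam+1) := by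
    exact ((gInt2 (lam := lam) (1-lam)).const_mul (2/lam)).const_mul M
  rw [intervalIntegrable_iff_integrableOn_Ioo_of_le hab']
  apply Integrable.mono' ((intervalIntegrable_iff_integrableOn_Ioo_of_le hab').mp hgInt)
  · apply ContinuousOn.aestronglyMeasurable ?_ measurableSet_Ioo
    apply ContinuousOn.mul (hf.comp continuous_neg).continuousOn
    apply ContinuousOn.congr
      (f := fun t => -(Real.sqrt (4 * lam ^ 2 - ((-t) ^ 2 - lam ^ 2 - 1) ^ 2) /
        (-lam * (-t - lam - 1) * (-t - lam + 1))))
    · apply ContinuousOn.neg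
      apply ContinuousOn.div
      · fun_prop
      · fun_prop
      · intro t ht
        obtain ⟨ht1, ht2⟩ := ht
        have h0 : 0 < t := tpos hlam ht1 ht2
        have ha2 : -(lam-1) ≤ |lam-1| := neg_le_abs _
        have hA : 0 < t + lam - 1 := by linarith
        have hB : 0 < (t + lam + 1) * (t + lam - 1) := mul_pos (by linarith) hA
        nlinarith [mul_pos hlam hB]
    · intro t ht
      obtain ⟨ht1, ht2⟩ := ht
      have h0 : 0 < t := tpos hlam ht1 ht2
      simp only [wfun]
      rw [Real.sign_of_neg (by linarith : -t < 0)]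
      field_simp
  · rw [ae_restrict_iff' measurableSet_Ioo]
    apply ae_of_all
    intro t ht
    obtain ⟨ht1, ht2⟩ := ht
    have h0 : 0 < t := tpos hlam ht1 ht2
    have hwpos : 0 ≤ wfun lam (-t) := by
      rw [wfun_neg_eq hlam ht1 ht2]; positivity
    have hfb : |f (-t)| ≤ M := hM (-t) ⟨by linarith, by linarith⟩
    have hwb := wfun_bound_neg hlam ht1 ht2
    calc ‖f (-t) * wfun lam (-t)‖ = |f (-t)| * wfun lam (-t) := by
          rw [norm_mul, Real.norm_eq_abs, Real.norm_eq_abs, abs_of_nonneg hwpos]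
      _ ≤ M * ((2/lam) * (t - (1 - lam)) ^ (-(1/2) : ℝ)) := by
          apply mul_le_mul hfb ?_ hwpos hM0
          calc wfun lam (-t) ≤ 2 / lam * (t - (1 - lam)) ^ (-(1/2) : ℝ) := hwb
            _ = _ := by ring
      _ = g t := rfl

end Integrability


/-- In the 1-periodic case (`a_n = 0`, `Φ_n(z) = z^n`) the pencil polynomials `Q_n(x;λ)`,
`λ > 0`, are orthogonal on the union of the two intervals
`E = [-λ-1, -|λ-1|] ∪ [|λ-1|, λ+1]` with respect to the nonnegative weight
`w(t) = sign(t)·√(4λ² - (t² - λ² - 1)²) / (-λ(t - λ - 1)(t - λ + 1))`. -/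
theorem stmt_12 (lam : ℝ) (hlam : 0 < lam)
    (u : ℕ → ℝ) (hu : ∀ n : ℕ, u n = if Even n then lam ^ 2 else 1)
    (Q : ℕ → ℝ → ℝ)
    (hQ0 : ∀ x : ℝ, Q 0 x = 1)
    (hQ1 : ∀ x : ℝ, Q 1 x = x - lam)
    (hQ : ∀ n : ℕ, 1 ≤ n → ∀ x : ℝ, Q (n + 1) x = x * Q n x - u n * Q (n - 1) x) :
    (∀ t ∈ Set.Icc (-lam - 1) (-|lam - 1|) ∪ Set.Icc |lam - 1| (lam + 1),
      0 ≤ Real.sign t * Real.sqrt (4 * lam ^ 2 - (t ^ 2 - lam ^ 2 - 1) ^ 2) /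
        (-lam * (t - lam - 1) * (t - lam + 1))) ∧
    (∀ n m : ℕ, n ≠ m →
      ∫ t in Set.Icc (-lam - 1) (-|lam - 1|) ∪ Set.Icc |lam - 1| (lam + 1),
        Q n t * Q m t *
          (Real.sign t * Real.sqrt (4 * lam ^ 2 - (t ^ 2 - lam ^ 2 - 1) ^ 2) /
            (-lam * (t - lam - 1) * (t - lam + 1))) = 0) := by
  have ha1 : lam - 1 ≤ |lam - 1| := le_abs_self _
  have ha2 : -(lam - 1) ≤ |lam - 1| := neg_le_abs _
  have ha0 : 0 ≤ |lam - 1| := abs_nonneg _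
  constructor
  · intro t ht
    rcases ht with ⟨ht1, ht2⟩ | ⟨ht1, ht2⟩
    · -- negative side
      have htn : t ≤ 0 := le_trans ht2 (by linarith)
      have hsgn : Real.sign t ≤ 0 := by
        rcases lt_or_eq_of_le htn with h | h
        · rw [Real.sign_of_neg h]; norm_num
        · rw [h, Real.sign_zero]
      have hnum : Real.sign t * Real.sqrt (4 * lam ^ 2 - (t ^ 2 - lam ^ 2 - 1) ^ 2) ≤ 0 :=
        mul_nonpos_of_nonpos_of_nonneg hsgn (Real.sqrt_nonneg _)
      have hden : -lam * (t - lam - 1) * (t - lam + 1) ≤ 0 := by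
        have h1 : t - lam - 1 ≤ 0 := by linarith
        have h2 : t - lam + 1 ≤ 0 := by linarith
        nlinarith [mul_nonneg hlam.le (mul_nonneg (neg_nonneg.2 h1) (neg_nonneg.2 h2))]
      have := div_nonneg (neg_nonneg.2 hnum) (neg_nonneg.2 hden)
      rwa [neg_div_neg_eq] at this
    · -- positive side
      have htp : 0 ≤ t := le_trans ha0 ht1
      have hsgn : 0 ≤ Real.sign t := by
        rcases lt_or_eq_of_le htp with h | h
        · rw [Real.sign_of_pos h]; norm_num
        · rw [← h, Real.sign_zero]
      have hden : 0 ≤ -lam * (t - lam - 1) * (t - lam + 1) := by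
        have h1 : t - lam - 1 ≤ 0 := by linarith
        have h2 : 0 ≤ t - lam + 1 := by linarith
        nlinarith [mul_nonneg hlam.le (mul_nonneg (neg_nonneg.2 h1) h2)]
      exact div_nonneg (mul_nonneg hsgn (Real.sqrt_nonneg _)) hden
  · intro n m hnm
    have hab' : |lam - 1| ≤ lam + 1 := (hab hlam).le
    have hrw : (fun t => Q n t * Q m t *
          (Real.sign t * Real.sqrt (4 * lam ^ 2 - (t ^ 2 - lam ^ 2 - 1) ^ 2) /
            (-lam * (t - lam - 1) * (t - lam + 1))))
        = fun t => Q n t * Q m t * wfun lam t := rfl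
    rw [hrw]
    set F : ℝ → ℝ := fun t => Q n t * Q m t * wfun lam t with hF
    have hfcont : Continuous fun t => Q n t * Q m t :=
      (contQ u Q hQ0 hQ1 hQ n).mul (contQ u Q hQ0 hQ1 hQ m)
    have hIpos : IntervalIntegrable F volume (|lam-1|) (lam+1) :=
      integrable_pos hlam (fun t => Q n t * Q m t) hfcont
    have hIneg : IntervalIntegrable (fun t => F (-t)) volume (|lam-1|) (lam+1) :=
      integrable_neg hlam (fun t => Q n t * Q m t) hfcont
    have hsub : Icc (-lam-1) (-|lam-1|) ∩ Icc |lam-1| (lam+1) ⊆ {(0:ℝ)} := by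
      intro x hx
      obtain ⟨⟨hx1, hx2⟩, hx3, hx4⟩ := hx
      have : x = 0 := by
        have h1 : x ≤ 0 := by linarith
        have h2 : 0 ≤ x := by linarith
        linarith
      simp [this]
    have hdisj : MeasureTheory.AEDisjoint volume (Icc (-lam-1) (-|lam-1|)) (Icc |lam-1| (lam+1)) :=
      measure_mono_null hsub (measure_singleton 0)
    have hIccPos : MeasureTheory.IntegrableOn F (Icc |lam-1| (lam+1)) volume := by
      exact (intervalIntegrable_iff_integrableOn_Icc_of_le hab').mp hIpos
    have hIccNeg : MeasureTheory.IntegrableOn F (Icc (-lam-1) (-|lam-1|)) volume := by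
      have h2 := (IntervalIntegrable.iff_comp_neg (by simp)).mp hIneg
      simp only [neg_neg] at h2
      have h3 : IntervalIntegrable F volume (-lam-1) (-|lam-1|) := by
        have := h2.symm
        simpa [show -(lam+1) = -lam-1 by ring] using this
      exact (intervalIntegrable_iff_integrableOn_Icc_of_le (by linarith)).mp h3
    rw [MeasureTheory.integral_union_ae hdisj measurableSet_Icc.nullMeasurableSet hIccNeg hIccPos]
    have e1 : ∫ t in Icc (-lam-1) (-|lam-1|), F t = ∫ t in |lam-1|..(lam+1), F (-t) := by
      rw [MeasureTheory.integral_Icc_eq_integral_Ioc,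
        ← intervalIntegral.integral_of_le (by linarith : -lam-1 ≤ -|lam-1|)]
      rw [intervalIntegral.integral_comp_neg (a := |lam-1|) (b := lam+1) F]
      norm_num [show -(lam+1) = -lam-1 by ring]
    have e2 : ∫ t in Icc |lam-1| (lam+1), F t = ∫ t in |lam-1|..(lam+1), F t := by
      rw [MeasureTheory.integral_Icc_eq_integral_Ioc, intervalIntegral.integral_of_le hab']
    rw [e1, e2, add_comm, ← intervalIntegral.integral_add hIpos hIneg]
    -- FTC
    set d : ℤ := dgE n - dgE m with hd
    set H : ℝ → ℝ := fun y =>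
      -(2 * lam ^ (n/2 + m/2) / (d:ℝ)) *
        Real.sin ((d:ℝ) * Real.arccos ((y^2 - lam^2 - 1)/(2*lam))) with hH
    have hcont : ContinuousOn H (Icc |lam-1| (lam+1)) := by
      apply Continuous.continuousOn
      apply continuous_const.mul
      apply Real.continuous_sin.comp
      apply continuous_const.mul
      apply Real.continuous_arccos.comp
      fun_prop
    have hderiv : ∀ x ∈ Ioo |lam-1| (lam+1),
        HasDerivWithinAt H (F x + F (-x)) (Ioi x) x := by
      intro x hx
      exact (hasDerivH hlam u hu Q hQ0 hQ1 hQ n m hnm hx.1 hx.2).hasDerivWithinAt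
    have hint : IntervalIntegrable (fun x => F x + F (-x)) volume (|lam-1|) (lam+1) :=
      hIpos.add hIneg
    rw [intervalIntegral.integral_eq_sub_of_hasDeriv_right_of_le hab' hcont hderiv hint]
    have hb1 : ((lam+1)^2 - lam^2 - 1)/(2*lam) = 1 := by field_simp; ring
    have hbm1 : ((|lam-1|)^2 - lam^2 - 1)/(2*lam) = -1 := by
      rw [sq_abs]; rw [div_eq_iff (by positivity : (2:ℝ)*lam ≠ 0)]; ring
    rw [hH]
    simp only [hb1, hbm1, Real.arccos_one, Real.arccos_neg_one]
    rw [mul_zero, Real.sin_zero, Real.sin_int_mul_pi]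
    ring
end

section
/- Let (A_n)_{n≥0} and (C_n)_{n≥0} be real sequences with C_0 = 0, let θ, χ, α, c be real numbers with θ = χ² + α - c². Define monic P_n by P_0 = 1, P_{n+1}(x) = (x - θ + A_n + C_n) P_n(x) - C_n A_{n-1} P_{n-1}(x), and monic P̃_n by P̃_0 = 1, P̃_{n+1}(x) = (x - θ + A_n + C_{n+1}) P̃_n(x) - C_n A_n P̃_{n-1}(x). Define S_{2n}(x) = P_n(x² + α - c²) and S_{2n+1}(x) = (x - χ) · P̃_n(x² + α - c²). Then the polynomials S_n satisfy the recurrence S_{n+1}(x) + (-1)^n χ S_n(x) + v_n S_{n-1}(x) = x S_n(x) for all n ≥ 1, where v_{2n} = -C_n and v_{2n+1} = -A_n. (Recurrence part of Lemma 2, the Chihara quadratic map.) -/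
/-- Recurrence part of **Lemma 2** (the Chihara quadratic map): with
`S_{2n}(x) = P_n(x² + α - c²)` and `S_{2n+1}(x) = (x - χ)·P̃_n(x² + α - c²)`,
where `θ = χ² + α - c²`, the polynomials `S_n` satisfy
`S_{n+1}(x) + (-1)^n·χ·S_n(x) + v_n·S_{n-1}(x) = x·S_n(x)` with
`v_{2n} = -C_n` and `v_{2n+1} = -A_n`. -/
theorem stmt_15 (A C : ℕ → ℝ) (hC0 : C 0 = 0) (θ χ α c : ℝ)
    (hθ : θ = χ ^ 2 + α - c ^ 2)
    (P Pt : ℕ → ℝ → ℝ)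
    (hP0 : ∀ x : ℝ, P 0 x = 1)
    (hP1 : ∀ x : ℝ, P 1 x = (x - θ + A 0 + C 0) * P 0 x)
    (hP : ∀ n : ℕ, 1 ≤ n → ∀ x : ℝ,
      P (n + 1) x = (x - θ + A n + C n) * P n x - C n * A (n - 1) * P (n - 1) x)
    (hPt0 : ∀ x : ℝ, Pt 0 x = 1)
    (hPt1 : ∀ x : ℝ, Pt 1 x = (x - θ + A 0 + C 1) * Pt 0 x)
    (hPt : ∀ n : ℕ, 1 ≤ n → ∀ x : ℝ,
      Pt (n + 1) x = (x - θ + A n + C (n + 1)) * Pt n x - C n * A n * Pt (n - 1) x)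
    (S : ℕ → ℝ → ℝ)
    (hSe : ∀ (n : ℕ) (x : ℝ), S (2 * n) x = P n (x ^ 2 + α - c ^ 2))
    (hSo : ∀ (n : ℕ) (x : ℝ), S (2 * n + 1) x = (x - χ) * Pt n (x ^ 2 + α - c ^ 2))
    (v : ℕ → ℝ)
    (hve : ∀ n : ℕ, v (2 * n) = -C n)
    (hvo : ∀ n : ℕ, v (2 * n + 1) = -A n) :
    ∀ n : ℕ, 1 ≤ n → ∀ x : ℝ,
      S (n + 1) x + (-1 : ℝ) ^ n * χ * S n x + v n * S (n - 1) x = x * S n x := by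
  have key : ∀ n : ℕ, ∀ y : ℝ,
      P (n + 1) y = (y - θ) * Pt n y + A n * P n y ∧
      P (n + 1) y = Pt (n + 1) y - C (n + 1) * Pt n y := by
    intro n
    induction n with
    | zero =>
      intro y
      refine ⟨?_, ?_⟩
      · rw [hP1, hP0, hPt0, hC0]; ring
      · rw [hP1, hPt1, hP0, hPt0, hC0]; ring
    | succ n ih =>
      intro y
      obtain ⟨hB, hA⟩ := ih y
      have hrecP := hP (n + 1) (by omega) y
      simp only [Nat.add_sub_cancel] at hrecP
      have hB' : P (n + 2) y = (y - θ) * Pt (n + 1) y + A (n + 1) * P (n + 1) y := by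
        linear_combination hrecP + (y - θ) * hA + C (n + 1) * hB
      refine ⟨hB', ?_⟩
      have hrecPt := hPt (n + 1) (by omega) y
      simp only [Nat.add_sub_cancel] at hrecPt
      linear_combination hB' - hrecPt + A (n + 1) * hA
  intro n hn x
  rcases Nat.even_or_odd n with ⟨m, hm⟩ | ⟨m, hm⟩
  · obtain ⟨k, rfl⟩ : ∃ k, m = k + 1 := ⟨m - 1, by omega⟩
    have hn2 : n = 2 * (k + 1) := by omega
    subst hn2
    have e2 : 2 * (k + 1) - 1 = 2 * k + 1 := by omega
    rw [e2, hSe (k + 1), hSo (k + 1), hSo k, hve (k + 1)]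
    have hpow : (-1 : ℝ) ^ (2 * (k + 1)) = 1 := by
      rw [pow_mul]; norm_num
    rw [hpow]
    have hA := (key k (x ^ 2 + α - c ^ 2)).2
    linear_combination (χ - x) * hA
  · have hn2 : n = 2 * m + 1 := by omega
    subst hn2
    have e1 : 2 * m + 1 + 1 = 2 * (m + 1) := by ring
    have e2 : 2 * m + 1 - 1 = 2 * m := by omega
    rw [e1, e2, hSe (m + 1), hSo m, hSe m, hvo m]
    have hpow : (-1 : ℝ) ^ (2 * m + 1) = -1 := by
      rw [pow_succ, pow_mul]; norm_num
    rw [hpow]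
    have hB := (key m (x ^ 2 + α - c ^ 2)).1
    linear_combination hB - Pt m (x ^ 2 + α - c ^ 2) * hθ
end

section
/- Let w ≥ 0 be an integrable weight function on a finite interval [α, β] and let P_n be the monic orthogonal polynomials for w, i.e. ∫_α^β P_n(x) P_m(x) w(x) dx = 0 for n ≠ m. Let θ < α, assume P_n(θ) ≠ 0 for all n, and set A_n = P_{n+1}(θ)/P_n(θ); let P̃_n(x) = (P_{n+1}(x) - A_n P_n(x))/(x - θ) be the Christoffel transforms. Let c > 0 with c ≥ sqrt(α - θ), and let χ be a real number with χ² = θ - α + c² (which is ≥ 0). Define S_{2n}(x) = P_n(x² + α - c²) and S_{2n+1}(x) = (x - χ) P̃_n(x² + α - c²). Then the polynomials S_n are orthogonal with respect to the weight sign(x) · (x + χ) · w(x² + α - c²) on the union of two intervals E = [-sqrt(β - α + c²), -c] ∪ [c, sqrt(β - α + c²)]: that is, ∫_E S_n(x) S_m(x) sign(x)(x + χ) w(x² + α - c²) dx = 0 for all n ≠ m. (Orthogonality part of Lemma 2, the Chihara quadratic map.) -/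
open MeasureTheory Polynomial

private lemma int_pp {α β : ℝ} {w : ℝ → ℝ} (hw : IntegrableOn w (Set.Icc α β))
    (p q : Polynomial ℝ) :
    IntegrableOn (fun t => p.eval t * q.eval t * w t) (Set.Icc α β) := by
  have hcont : ContinuousOn (fun t => p.eval t * q.eval t) (Set.Icc α β) :=
    ((p.continuous_aeval).mul (q.continuous_aeval)).continuousOn
  obtain ⟨C, hC⟩ := isCompact_Icc.exists_bound_of_continuousOn hcont
  have : Integrable (fun t => (p.eval t * q.eval t) * w t) (volume.restrict (Set.Icc α β)) := by
    refine Integrable.bdd_mul (c := C) hw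
      ((p.continuous_aeval.mul q.continuous_aeval).aestronglyMeasurable.restrict) ?_
    exact (ae_restrict_iff' measurableSet_Icc).2 (Filter.Eventually.of_forall hC)
  simpa [mul_assoc, IntegrableOn] using this

private lemma orth_lt {α β : ℝ} {w : ℝ → ℝ} (hw : IntegrableOn w (Set.Icc α β))
    (P : ℕ → Polynomial ℝ) (hmonic : ∀ n, (P n).Monic) (hdeg : ∀ n, (P n).natDegree = n)
    (horth : ∀ n m : ℕ, n ≠ m → ∫ x in Set.Icc α β, (P n).eval x * (P m).eval x * w x = 0) :
    ∀ (d : ℕ) (Q : Polynomial ℝ), Q.natDegree ≤ d → ∀ N, d < N →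
      ∫ x in Set.Icc α β, Q.eval x * (P N).eval x * w x = 0 := by
  intro d
  induction d using Nat.strong_induction_on with
  | _ d IH =>
    intro Q hQ N hN
    by_cases hQ0 : Q = 0
    · simp [hQ0]
    set e := Q.natDegree with he
    set R : Polynomial ℝ := Q - Polynomial.C Q.leadingCoeff * P e with hR
    have hlc : Q.leadingCoeff ≠ 0 := leadingCoeff_ne_zero.2 hQ0
    have hCP0 : Polynomial.C Q.leadingCoeff * P e ≠ 0 :=
      mul_ne_zero (by simpa using hlc) (hmonic e).ne_zero
    have hdegeq : Q.degree = (Polynomial.C Q.leadingCoeff * P e).degree := by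
      rw [degree_C_mul hlc, degree_eq_natDegree hQ0, degree_eq_natDegree (hmonic e).ne_zero, hdeg]
    have hlceq : Q.leadingCoeff = (Polynomial.C Q.leadingCoeff * P e).leadingCoeff := by
      rw [leadingCoeff_mul, leadingCoeff_C, (hmonic e).leadingCoeff, mul_one]
    have hdR : R.degree < Q.degree := degree_sub_lt hdegeq hQ0 hlceq
    have hsplit : ∀ x : ℝ, Q.eval x * (P N).eval x * w x =
        Q.leadingCoeff * ((P e).eval x * (P N).eval x * w x) + R.eval x * (P N).eval x * w x := by
      intro x
      rw [hR]
      simp only [eval_sub, eval_mul, eval_C]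
      ring
    have hint1 : Integrable (fun x => Q.leadingCoeff * ((P e).eval x * (P N).eval x * w x))
        (volume.restrict (Set.Icc α β)) := (int_pp hw (P e) (P N)).const_mul _
    have hint2 : Integrable (fun x => R.eval x * (P N).eval x * w x)
        (volume.restrict (Set.Icc α β)) := int_pp hw R (P N)
    calc ∫ x in Set.Icc α β, Q.eval x * (P N).eval x * w x
        = ∫ x in Set.Icc α β, (Q.leadingCoeff * ((P e).eval x * (P N).eval x * w x)
            + R.eval x * (P N).eval x * w x) := by
          exact setIntegral_congr_fun measurableSet_Icc (fun x _ => hsplit x)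
      _ = Q.leadingCoeff * (∫ x in Set.Icc α β, (P e).eval x * (P N).eval x * w x)
            + ∫ x in Set.Icc α β, R.eval x * (P N).eval x * w x := by
          rw [integral_add hint1 hint2, integral_const_mul]
      _ = 0 := by
          rw [horth e N (by omega)]
          by_cases hR0 : R = 0
          · simp [hR0]
          · have hRd : R.natDegree < e := by
              exact natDegree_lt_natDegree hR0 hdR
            rw [IH R.natDegree (by omega) R le_rfl N (by omega)]
            ring

private lemma subst_quad (c b k : ℝ) (hc : 0 ≤ c) (hcb : c ≤ b) (h : ℝ → ℝ) :
    ∫ t in Set.Icc (c ^ 2 + k) (b ^ 2 + k), h t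
      = ∫ x in Set.Icc c b, |2 * x| • h (x ^ 2 + k) := by
  have himg : (fun x : ℝ => x ^ 2 + k) '' Set.Icc c b = Set.Icc (c ^ 2 + k) (b ^ 2 + k) := by
    apply Set.Subset.antisymm
    · rintro _ ⟨x, hx, rfl⟩
      obtain ⟨h1, h2⟩ := hx
      simp only [Set.mem_Icc]
      constructor
      · nlinarith
      · nlinarith
    · have hcont : ContinuousOn (fun x : ℝ => x ^ 2 + k) (Set.Icc c b) :=
        ((continuous_pow 2).add continuous_const).continuousOn
      exact intermediate_value_Icc hcb hcont
  have hderiv : ∀ x ∈ Set.Icc c b, HasDerivWithinAt (fun x : ℝ => x ^ 2 + k) (2 * x)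
      (Set.Icc c b) x := by
    intro x _
    have : HasDerivAt (fun x : ℝ => x ^ 2 + k) (2 * x) x := by
      simpa using (hasDerivAt_pow 2 x).add_const k
    exact this.hasDerivWithinAt
  have hinj : Set.InjOn (fun x : ℝ => x ^ 2 + k) (Set.Icc c b) := by
    intro x hx y hy hxy
    have hx0 : 0 ≤ x := le_trans hc hx.1
    have hy0 : 0 ≤ y := le_trans hc hy.1
    have h2 : x ^ 2 = y ^ 2 := by simpa using hxy
    have := congrArg Real.sqrt h2
    rwa [Real.sqrt_sq hx0, Real.sqrt_sq hy0] at this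
  rw [← himg]
  exact integral_image_eq_integral_abs_deriv_smul measurableSet_Icc hderiv hinj h

private lemma neg_img (a b : ℝ) : (fun x : ℝ => -x) '' Set.Icc a b = Set.Icc (-b) (-a) := by
  ext y
  constructor
  · rintro ⟨x, hx, rfl⟩
    obtain ⟨h1, h2⟩ := hx
    simp only [Set.mem_Icc]
    constructor <;> linarith
  · intro hy
    exact ⟨-y, ⟨by linarith [hy.2], by linarith [hy.1]⟩, by ring⟩

private lemma neg_deriv (a b : ℝ) : ∀ x ∈ Set.Icc a b,
    HasDerivWithinAt (fun x : ℝ => -x) ((fun _ : ℝ => (-1 : ℝ)) x) (Set.Icc a b) x :=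
  fun x _ => (hasDerivAt_neg x).hasDerivWithinAt

private lemma neg_integral (a b : ℝ) (g : ℝ → ℝ) :
    ∫ x in Set.Icc (-b) (-a), g x = ∫ x in Set.Icc a b, g (-x) := by
  rw [← neg_img a b]
  have := integral_image_eq_integral_abs_deriv_smul measurableSet_Icc (neg_deriv a b)
    (neg_injective.injOn) g
  simpa using this

private lemma neg_integrableOn {a b : ℝ} {g : ℝ → ℝ}
    (h : IntegrableOn g (Set.Icc (-b) (-a))) :
    IntegrableOn (fun x => g (-x)) (Set.Icc a b) := by
  rw [← neg_img a b] at h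
  have := (integrableOn_image_iff_integrableOn_abs_deriv_smul measurableSet_Icc (neg_deriv a b)
    (neg_injective.injOn) g).1 h
  simpa using this
/-- Orthogonality part of **Lemma 2** (the Chihara quadratic map): if `P_n` are the monic
orthogonal polynomials for an integrable weight `w ≥ 0` on `[α, β]`, `θ < α`,
`A_n = P_{n+1}(θ)/P_n(θ)`, `P̃_n` are the Christoffel transforms at `θ`, `c > 0` with
`c ≥ √(α - θ)` and `χ² = θ - α + c²`, then `S_{2n}(x) = P_n(x² + α - c²)` and
`S_{2n+1}(x) = (x - χ)·P̃_n(x² + α - c²)` are orthogonal with respect to the weight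
`sign(x)·(x + χ)·w(x² + α - c²)` on `[-√(β - α + c²), -c] ∪ [c, √(β - α + c²)]`. -/
theorem stmt_16 (α β : ℝ) (hαβ : α < β) (w : ℝ → ℝ)
    (hw_nonneg : ∀ x ∈ Set.Icc α β, 0 ≤ w x)
    (hw_int : IntegrableOn w (Set.Icc α β))
    (P : ℕ → Polynomial ℝ)
    (hmonic : ∀ n : ℕ, (P n).Monic) (hdeg : ∀ n : ℕ, (P n).natDegree = n)
    (horth : ∀ n m : ℕ, n ≠ m →
      ∫ x in Set.Icc α β, (P n).eval x * (P m).eval x * w x = 0)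
    (θ : ℝ) (hθ : θ < α) (hPθ : ∀ n : ℕ, (P n).eval θ ≠ 0)
    (A : ℕ → ℝ) (hA : ∀ n : ℕ, A n = (P (n + 1)).eval θ / (P n).eval θ)
    (Pt : ℕ → ℝ → ℝ)
    (hPt : ∀ (n : ℕ) (x : ℝ), Pt n x = ((P (n + 1)).eval x - A n * (P n).eval x) / (x - θ))
    (c : ℝ) (hc : 0 < c) (hcθ : Real.sqrt (α - θ) ≤ c)
    (χ : ℝ) (hχ : χ ^ 2 = θ - α + c ^ 2)
    (S : ℕ → ℝ → ℝ)
    (hSe : ∀ (n : ℕ) (x : ℝ), S (2 * n) x = (P n).eval (x ^ 2 + α - c ^ 2))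
    (hSo : ∀ (n : ℕ) (x : ℝ), S (2 * n + 1) x = (x - χ) * Pt n (x ^ 2 + α - c ^ 2))
    (n m : ℕ) (hnm : n ≠ m) :
    ∫ x in Set.Icc (-Real.sqrt (β - α + c ^ 2)) (-c) ∪
        Set.Icc c (Real.sqrt (β - α + c ^ 2)),
      S n x * S m x * (Real.sign x * (x + χ) * w (x ^ 2 + α - c ^ 2)) = 0 := by
  set b : ℝ := Real.sqrt (β - α + c ^ 2) with hb
  have hβpos : (0 : ℝ) ≤ β - α + c ^ 2 := by nlinarith
  have hb2 : b ^ 2 = β - α + c ^ 2 := Real.sq_sqrt hβpos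
  have hcb : c ≤ b := by
    have h1 : Real.sqrt (c ^ 2) ≤ b := Real.sqrt_le_sqrt (by nlinarith)
    rwa [Real.sqrt_sq hc.le] at h1
  -- the master reduction
  have master : ∀ f h : ℝ → ℝ,
      (∀ x ∈ Set.Icc c b, f x + f (-x) = |2 * x| • h (x ^ 2 + (α - c ^ 2))) →
      (∫ t in Set.Icc α β, h t = 0) →
      ∫ x in Set.Icc (-b) (-c) ∪ Set.Icc c b, f x = 0 := by
    intro f h hfh h0
    by_cases hI : IntegrableOn f (Set.Icc (-b) (-c) ∪ Set.Icc c b)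
    · have hA' : IntegrableOn f (Set.Icc (-b) (-c)) := hI.mono_set Set.subset_union_left
      have hB : IntegrableOn f (Set.Icc c b) := hI.mono_set Set.subset_union_right
      have hdis : Disjoint (Set.Icc (-b) (-c)) (Set.Icc c b) := by
        rw [Set.disjoint_left]
        intro x hx hx'
        have h1 := hx.2
        have h2 := hx'.1
        linarith
      rw [setIntegral_union hdis measurableSet_Icc hA' hB, neg_integral c b f]
      have hBneg : IntegrableOn (fun x => f (-x)) (Set.Icc c b) := neg_integrableOn hA'
      rw [← integral_add hBneg hB]
      have hcong : ∫ x in Set.Icc c b, (f (-x) + f x)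
          = ∫ x in Set.Icc c b, |2 * x| • h (x ^ 2 + (α - c ^ 2)) :=
        setIntegral_congr_fun measurableSet_Icc (fun x hx => by
          rw [add_comm]; exact hfh x hx)
      have hs := subst_quad c b (α - c ^ 2) hc.le hcb h
      rw [show c ^ 2 + (α - c ^ 2) = α by ring,
        show b ^ 2 + (α - c ^ 2) = β by rw [hb2]; ring] at hs
      rw [hcong, ← hs]
      exact h0
    · exact integral_undef hI
  -- Christoffel quotients as polynomials
  set Q : ℕ → Polynomial ℝ :=
    fun j => (P (j + 1) - Polynomial.C (A j) * P j) /ₘ (Polynomial.X - Polynomial.C θ) with hQ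
  have hroot : ∀ j : ℕ, (P (j + 1) - Polynomial.C (A j) * P j).IsRoot θ := by
    intro j
    show Polynomial.eval θ _ = 0
    rw [Polynomial.eval_sub, Polynomial.eval_mul, Polynomial.eval_C, hA j,
      div_mul_cancel₀ _ (hPθ j), sub_self]
  have hQk : ∀ j : ℕ, (Polynomial.X - Polynomial.C θ) * Q j
      = P (j + 1) - Polynomial.C (A j) * P j :=
    fun j => Polynomial.mul_divByMonic_eq_iff_isRoot.2 (hroot j)
  have hNdeg : ∀ j : ℕ, (P (j + 1) - Polynomial.C (A j) * P j).natDegree = j + 1 := by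
    intro j
    have h1 : (Polynomial.C (A j) * P j).natDegree < (P (j + 1)).natDegree := by
      have := Polynomial.natDegree_C_mul_le (A j) (P j)
      rw [hdeg (j + 1)]
      rw [hdeg j] at this
      omega
    rw [Polynomial.natDegree_sub_eq_left_of_natDegree_lt h1, hdeg]
  have hQdeg : ∀ j : ℕ, (Q j).natDegree = j := by
    intro j
    rw [hQ]
    rw [Polynomial.natDegree_divByMonic _ (Polynomial.monic_X_sub_C θ),
      Polynomial.natDegree_X_sub_C, hNdeg j]
    omega
  have hQkev : ∀ (j : ℕ) (t : ℝ),
      (t - θ) * (Q j).eval t = (P (j + 1)).eval t - A j * (P j).eval t := by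
    intro j t
    have := congrArg (Polynomial.eval t) (hQk j)
    simpa [Polynomial.eval_mul, Polynomial.eval_sub] using this
  have hPtQ : ∀ (j : ℕ) (t : ℝ), t ≠ θ → Pt j t = (Q j).eval t := by
    intro j t ht
    rw [hPt j t, ← hQkev j t, mul_comm (t - θ), mul_div_assoc,
      div_self (sub_ne_zero.2 ht), mul_one]
  -- facts about points in [c, b]
  have hmem : ∀ x : ℝ, x ∈ Set.Icc c b → 0 < x ∧ Real.sign x = 1 ∧ Real.sign (-x) = -1
      ∧ |2 * x| = 2 * x ∧ x ^ 2 + α - c ^ 2 ≠ θ := by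
    intro x hx
    have hx0 : 0 < x := lt_of_lt_of_le hc hx.1
    refine ⟨hx0, Real.sign_of_pos hx0, Real.sign_of_neg (by linarith), abs_of_pos (by linarith), ?_⟩
    have : c ^ 2 ≤ x ^ 2 := by nlinarith [hx.1]
    intro hcontra
    nlinarith
  -- odd-odd key, assuming k < l
  have keyOO : ∀ k l : ℕ, k < l →
      ∫ x in Set.Icc (-b) (-c) ∪ Set.Icc c b,
        S (2 * k + 1) x * S (2 * l + 1) x
          * (Real.sign x * (x + χ) * w (x ^ 2 + α - c ^ 2)) = 0 := by
    intro k l hkl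
    apply master _
      (fun t => ((Q k) * (P (l + 1) - Polynomial.C (A l) * P l)).eval t * w t)
    · intro x hx
      obtain ⟨hx0, hs1, hs2, habs, htθ⟩ := hmem x hx
      simp only [hSo]
      rw [show (-x : ℝ) ^ 2 = x ^ 2 by ring, hs1, hs2, habs, smul_eq_mul,
        show x ^ 2 + (α - c ^ 2) = x ^ 2 + α - c ^ 2 by ring,
        hPtQ k _ htθ, hPtQ l _ htθ, Polynomial.eval_mul]
      rw [show Polynomial.eval (x ^ 2 + α - c ^ 2) (P (l + 1) - Polynomial.C (A l) * P l)
          = (x ^ 2 + α - c ^ 2 - θ) * (Q l).eval (x ^ 2 + α - c ^ 2) by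
        rw [hQkev l]; simp [Polynomial.eval_sub, Polynomial.eval_mul]]
      rw [show θ = χ ^ 2 + α - c ^ 2 by linarith]
      ring
    · have hsplit : (fun t => ((Q k) * (P (l + 1) - Polynomial.C (A l) * P l)).eval t * w t)
          = fun t => (Q k).eval t * (P (l + 1)).eval t * w t
              - A l * ((Q k).eval t * (P l).eval t * w t) := by
        funext t
        simp only [Polynomial.eval_mul, Polynomial.eval_sub, Polynomial.eval_C]
        ring
      rw [hsplit, integral_sub (int_pp hw_int (Q k) (P (l + 1)))
        ((int_pp hw_int (Q k) (P l)).const_mul (A l)), integral_const_mul,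
        orth_lt hw_int P hmonic hdeg horth k (Q k) (le_of_eq (hQdeg k)) (l + 1) (by omega),
        orth_lt hw_int P hmonic hdeg horth k (Q k) (le_of_eq (hQdeg k)) l (by omega)]
      ring
  -- mixed key
  have keyEO : ∀ k l : ℕ,
      ∫ x in Set.Icc (-b) (-c) ∪ Set.Icc c b,
        S (2 * k) x * S (2 * l + 1) x
          * (Real.sign x * (x + χ) * w (x ^ 2 + α - c ^ 2)) = 0 := by
    intro k l
    apply master _ (fun _ => (0 : ℝ))
    · intro x hx
      obtain ⟨hx0, hs1, hs2, habs, htθ⟩ := hmem x hx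
      simp only [hSe, hSo]
      rw [show (-x : ℝ) ^ 2 = x ^ 2 by ring, hs1, hs2]
      simp only [smul_zero]
      ring
    · simp
  -- the four parity cases
  rcases Nat.even_or_odd n with ⟨k, hk⟩ | ⟨k, hk⟩ <;>
    rcases Nat.even_or_odd m with ⟨l, hl⟩ | ⟨l, hl⟩
  · -- even, even
    rw [show n = 2 * k by omega, show m = 2 * l by omega]
    apply master _ (fun t => (P k).eval t * (P l).eval t * w t)
    · intro x hx
      obtain ⟨hx0, hs1, hs2, habs, htθ⟩ := hmem x hx
      simp only [hSe]
      rw [show (-x : ℝ) ^ 2 = x ^ 2 by ring, hs1, hs2, habs, smul_eq_mul,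
        show x ^ 2 + (α - c ^ 2) = x ^ 2 + α - c ^ 2 by ring]
      ring
    · exact horth k l (by omega)
  · -- even, odd
    rw [show n = 2 * k by omega, hl]
    exact keyEO k l
  · -- odd, even
    rw [hk, show m = 2 * l by omega]
    have hswap : ∀ x : ℝ, S (2 * k + 1) x * S (2 * l) x
        * (Real.sign x * (x + χ) * w (x ^ 2 + α - c ^ 2))
        = S (2 * l) x * S (2 * k + 1) x
        * (Real.sign x * (x + χ) * w (x ^ 2 + α - c ^ 2)) := fun x => by ring
    simp only [hswap]
    exact keyEO l k
  · -- odd, odd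
    rw [hk, hl]
    have hkl : k ≠ l := by omega
    rcases hkl.lt_or_gt with h | h
    · exact keyOO k l h
    · have hswap : ∀ x : ℝ, S (2 * k + 1) x * S (2 * l + 1) x
          * (Real.sign x * (x + χ) * w (x ^ 2 + α - c ^ 2))
          = S (2 * l + 1) x * S (2 * k + 1) x
          * (Real.sign x * (x + χ) * w (x ^ 2 + α - c ^ 2)) := fun x => by ring
      simp only [hswap]
      exact keyOO l k h
end

section
/- For every integer n ≥ 0: Q_{n+1}(λ-1; λ) = A_n · Q_n(λ-1; λ), where A_n = -(1 + a_n) if n is even and A_n = λ(1 - a_n) if n is odd; and Q_{n+1}(λ+1; λ) = A'_n · Q_n(λ+1; λ), where A'_n = 1 - a_n if n is even and A'_n = λ(1 - a_n) if n is odd. (These are the Christoffel ratios of the pencil polynomials Q_n(x;λ) at the points θ = λ ∓ 1.) -/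
/-- Christoffel ratios of the pencil polynomials `Q_n(x;λ)` at the points `θ = λ ∓ 1`:
`Q_{n+1}(λ-1;λ) = A_n·Q_n(λ-1;λ)` with `A_n = -(1 + a_n)` (`n` even), `λ(1 - a_n)` (`n` odd),
and `Q_{n+1}(λ+1;λ) = A'_n·Q_n(λ+1;λ)` with `A'_n = 1 - a_n` (`n` even), `λ(1 - a_n)` (`n` odd). -/
theorem stmt_17 (a : ℤ → ℝ) (ha : a (-1) = -1) (hlt : ∀ n : ℤ, 0 ≤ n → |a n| < 1)
    (lam : ℝ) (Q : ℕ → ℝ → ℝ)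
    (hQ0 : ∀ x : ℝ, Q 0 x = 1)
    (hQ1 : ∀ x : ℝ, Q 1 x = x - (a 0 - lam * a (-1)))
    (hQ : ∀ n : ℕ, 1 ≤ n → ∀ x : ℝ,
      Q (n + 1) x =
        (x - (if Even n then a n - lam * a ((n : ℤ) - 1)
              else lam * a n - a ((n : ℤ) - 1))) * Q n x -
        (if Even n then lam ^ 2 * (1 - a ((n : ℤ) - 1) ^ 2)
         else 1 - a ((n : ℤ) - 1) ^ 2) * Q (n - 1) x) :
    (∀ n : ℕ, Q (n + 1) (lam - 1) =
      (if Even n then -(1 + a n) else lam * (1 - a n)) * Q n (lam - 1)) ∧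
    (∀ n : ℕ, Q (n + 1) (lam + 1) =
      (if Even n then 1 - a n else lam * (1 - a n)) * Q n (lam + 1)) := by
  constructor
  · intro n
    induction n with
    | zero =>
      simp only [if_pos (Even.zero), hQ1, hQ0, ha]
      ring
    | succ n ih =>
      have hrec := hQ (n + 1) (by omega) (lam - 1)
      simp only [Nat.cast_add, Nat.cast_one, add_sub_cancel_right,
        Nat.add_sub_cancel] at hrec
      rcases Nat.even_or_odd n with he | ho
      · have hE : ¬ Even (n + 1) := by simp [Nat.even_add_one, he]
        simp only [if_neg hE] at hrec ⊢
        rw [if_pos he] at ih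
        rw [hrec, ih]; push_cast
        ring
      · have hE : Even (n + 1) := Odd.add_one ho
        simp only [if_pos hE] at hrec ⊢
        rw [if_neg (Nat.not_even_iff_odd.mpr ho)] at ih
        rw [hrec, ih]; push_cast
        ring
  · intro n
    induction n with
    | zero =>
      simp only [if_pos (Even.zero), hQ1, hQ0, ha]
      ring
    | succ n ih =>
      have hrec := hQ (n + 1) (by omega) (lam + 1)
      simp only [Nat.cast_add, Nat.cast_one, add_sub_cancel_right,
        Nat.add_sub_cancel] at hrec
      rcases Nat.even_or_odd n with he | ho
      · have hE : ¬ Even (n + 1) := by simp [Nat.even_add_one, he]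
        simp only [if_neg hE] at hrec ⊢
        rw [if_pos he] at ih
        rw [hrec, ih]; push_cast
        ring
      · have hE : Even (n + 1) := Odd.add_one ho
        simp only [if_pos hE] at hrec ⊢
        rw [if_neg (Nat.not_even_iff_odd.mpr ho)] at ih
        rw [hrec, ih]; push_cast
        ring
end

section
/- Define monic polynomials Q̃_n(x;λ) by Q̃_0 = 1 and Q̃_{n+1}(x;λ) = (x - (-1)^n(λ+1)) Q̃_n(x;λ) - ũ_n Q̃_{n-1}(x;λ) for n ≥ 1, with Q̃_1(x;λ) = x - (λ+1), where ũ_n = -λ(1 + (-1)^n a_n)(1 + (-1)^n a_{n-1}). Then for every integer n ≥ 0 and every real x, one has (x - λ + 1) · Q̃_n(x;λ) = Q_{n+1}(x;λ) - A_n · Q_n(x;λ), where A_n = -(1 + a_n) if n is even and A_n = λ(1 - a_n) if n is odd. That is, the Christoffel transforms of the pencil polynomials Q_n(x;λ) at the point θ = λ - 1 satisfy a three-term recurrence with alternating diagonal coefficients (-1)^n(λ+1) and off-diagonal coefficients ũ_n. -/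
/-- The Christoffel transforms of the pencil polynomials `Q_n(x;λ)` at the point
`θ = λ - 1` satisfy a three-term recurrence with alternating diagonal coefficients
`(-1)^n(λ+1)` and off-diagonal coefficients `ũ_n = -λ(1 + (-1)^n a_n)(1 + (-1)^n a_{n-1})`:
`(x - λ + 1)·Q̃_n(x;λ) = Q_{n+1}(x;λ) - A_n·Q_n(x;λ)` with `A_n = -(1 + a_n)` (`n` even)
and `A_n = λ(1 - a_n)` (`n` odd). -/
theorem stmt_18 (a : ℤ → ℝ) (ha : a (-1) = -1) (hlt : ∀ n : ℤ, 0 ≤ n → |a n| < 1)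
    (lam : ℝ) (Q Qt : ℕ → ℝ → ℝ)
    (hQ0 : ∀ x : ℝ, Q 0 x = 1)
    (hQ1 : ∀ x : ℝ, Q 1 x = x - (a 0 - lam * a (-1)))
    (hQ : ∀ n : ℕ, 1 ≤ n → ∀ x : ℝ,
      Q (n + 1) x =
        (x - (if Even n then a n - lam * a ((n : ℤ) - 1)
              else lam * a n - a ((n : ℤ) - 1))) * Q n x -
        (if Even n then lam ^ 2 * (1 - a ((n : ℤ) - 1) ^ 2)
         else 1 - a ((n : ℤ) - 1) ^ 2) * Q (n - 1) x)
    (hQt0 : ∀ x : ℝ, Qt 0 x = 1)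
    (hQt1 : ∀ x : ℝ, Qt 1 x = x - (lam + 1))
    (hQt : ∀ n : ℕ, 1 ≤ n → ∀ x : ℝ,
      Qt (n + 1) x = (x - (-1 : ℝ) ^ n * (lam + 1)) * Qt n x -
        (-lam * (1 + (-1 : ℝ) ^ n * a n) * (1 + (-1 : ℝ) ^ n * a ((n : ℤ) - 1))) *
          Qt (n - 1) x) :
    ∀ (n : ℕ) (x : ℝ),
      (x - lam + 1) * Qt n x =
        Q (n + 1) x - (if Even n then -(1 + a n) else lam * (1 - a n)) * Q n x := by
  suffices h : ∀ n : ℕ, (∀ x : ℝ,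
      (x - lam + 1) * Qt n x =
        Q (n + 1) x - (if Even n then -(1 + a n) else lam * (1 - a n)) * Q n x) ∧
      (∀ x : ℝ,
      (x - lam + 1) * Qt (n + 1) x =
        Q (n + 2) x - (if Even (n + 1) then -(1 + a (n + 1)) else lam * (1 - a (n + 1))) * Q (n + 1) x) by
    intro n x; exact (h n).1 x
  intro n
  induction n with
  | zero =>
    constructor
    · intro x
      rw [hQt0, hQ1, hQ0, ha]
      norm_num
      ring
    · intro x
      have h2 := hQ 1 le_rfl x
      norm_num at h2 ⊢
      rw [hQt1, h2, hQ1, hQ0, ha]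
      ring
  | succ n ih =>
    refine ⟨ih.2, fun x => ?_⟩
    have h1 := ih.1 x
    have h2 := ih.2 x
    have hqt := hQt (n + 1) (by omega) x
    have hq2 := hQ (n + 1) (by omega) x
    have hq3 := hQ (n + 2) (by omega) x
    simp only [Nat.add_sub_cancel] at hqt hq2 hq3
    simp only [show n+1+1 = n+2 from by omega, show n+2+1 = n+3 from by omega,
      show n+1+2 = n+3 from by omega] at hqt hq2 hq3 ⊢
    push_cast at hqt hq2 hq3 ⊢
    rw [show ((n : ℤ) + 1 + 1) = (n : ℤ) + 2 from by ring]
    rw [show ((n : ℤ) + 1 - 1) = (n : ℤ) from by ring] at hqt hq2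
    rw [show ((n : ℤ) + 2 - 1) = (n : ℤ) + 1 from by ring] at hq3
    rcases Nat.even_or_odd n with he | ho
    · have e1 : ¬ Even (n + 1) := by simp [Nat.even_add_one, he]
      have e2 : Even (n + 2) := Nat.even_add_one.mpr e1
      have p1 : (-1 : ℝ) ^ (n + 1) = -1 := by
        rw [pow_succ, he.neg_one_pow]; ring
      simp only [if_pos he, if_neg e1, if_pos e2, p1] at h1 h2 hqt hq2 hq3 ⊢
      rw [hq2] at h2
      rw [hqt, hq3, hq2]
      linear_combination (x + (lam + 1)) * h2 - (-lam * (1 + (-1) * a ((n : ℤ) + 1)) * (1 + (-1) * a (n : ℤ))) * h1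
    · have he : ¬ Even n := Nat.not_even_iff_odd.mpr ho
      have e1 : Even (n + 1) := Nat.even_add_one.mpr he
      have e2 : ¬ Even (n + 2) := by simp [Nat.even_add_one, e1]
      have p1 : (-1 : ℝ) ^ (n + 1) = 1 := by
        rw [pow_succ, (Nat.not_even_iff_odd.mp he).neg_one_pow]; ring
      simp only [if_neg he, if_pos e1, if_neg e2, p1] at h1 h2 hqt hq2 hq3 ⊢
      rw [hq2] at h2
      rw [hqt, hq3, hq2]
      linear_combination (x - (lam + 1)) * h2 - (-lam * (1 + a ((n : ℤ) + 1)) * (1 + a (n : ℤ))) * h1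
end

section
/- Let V_n and W_n be the Chebyshev polynomials of the third and fourth kind, defined by V_0 = W_0 = 1, V_1(x) = 2x - 1, W_1(x) = 2x + 1, and V_{n+1}(x) = 2x V_n(x) - V_{n-1}(x), W_{n+1}(x) = 2x W_n(x) - W_{n-1}(x) for n ≥ 1. Then for every integer n ≥ 0 and every real x: (i) V_n(-x) = (-1)^n W_n(x), and (ii) V_n satisfies the Dunkl-type first-order eigenvalue equation 2(x - 1) · d/dx[V_n(-x)] + V_n(-x) = (-1)^n (2n + 1) V_n(x), where d/dx[V_n(-x)] denotes the derivative of the reflected function x ↦ V_n(-x). (This is the eigenvalue equation for the little -1 Jacobi polynomials with α = β = 0.) -/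
private def chebP (V W : ℕ → ℝ → ℝ) (n : ℕ) : Prop :=
  ∃ dW : ℝ → ℝ, ∀ x : ℝ,
    HasDerivAt (W n) (dW x) x ∧
    V n (-x) = (-1 : ℝ) ^ n * W n x ∧
    x * V n x - (x - 1) * W n x = V (n - 1) x ∧
    2 * (x - 1) * dW x + W n x = (2 * (n : ℝ) + 1) * V n x

private lemma cheb_key (V W : ℕ → ℝ → ℝ)
    (hV0 : ∀ x : ℝ, V 0 x = 1) (hW0 : ∀ x : ℝ, W 0 x = 1)
    (hV1 : ∀ x : ℝ, V 1 x = 2 * x - 1) (hW1 : ∀ x : ℝ, W 1 x = 2 * x + 1)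
    (hV : ∀ n : ℕ, 1 ≤ n → ∀ x : ℝ, V (n + 1) x = 2 * x * V n x - V (n - 1) x)
    (hW : ∀ n : ℕ, 1 ≤ n → ∀ x : ℝ, W (n + 1) x = 2 * x * W n x - W (n - 1) x) :
    ∀ n : ℕ, chebP V W n := by
  have hWfun0 : W 0 = fun _ => (1 : ℝ) := funext hW0
  have hWfun1 : W 1 = fun x => 2 * x + 1 := funext hW1
  have main : ∀ n : ℕ, chebP V W n ∧ chebP V W (n + 1) := by
    intro n
    induction n with
    | zero =>
      constructor
      · refine ⟨fun _ => 0, fun x => ?_⟩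
        refine ⟨?_, ?_, ?_, ?_⟩
        · rw [hWfun0]; exact hasDerivAt_const x 1
        · simp [hV0, hW0]
        · simp [hV0, hW0]
        · simp [hV0, hW0]
      · refine ⟨fun _ => 2, fun x => ?_⟩
        refine ⟨?_, ?_, ?_, ?_⟩
        · rw [hWfun1]
          have h := ((hasDerivAt_id x).const_mul (2 : ℝ)).add_const (1 : ℝ)
          simpa using h
        · rw [hV1, hW1]; push_cast; ring
        · rw [hV1, hW1, hV0]; ring
        · rw [hV1, hW1]; push_cast; ring
    | succ n ih =>
      obtain ⟨⟨dW0, h0⟩, ⟨dW1, h1⟩⟩ := ih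
      refine ⟨⟨dW1, h1⟩, fun x => 2 * W (n + 1) x + 2 * x * dW1 x - dW0 x, fun x => ?_⟩
      have hB1 : x * V (n + 1) x - (x - 1) * W (n + 1) x = V n x := (h1 x).2.2.1
      have hB0 : x * V n x - (x - 1) * W n x = V (n - 1) x := (h0 x).2.2.1
      have hA1 : 2 * (x - 1) * dW1 x + W (n + 1) x = (2 * ((n : ℝ) + 1) + 1) * V (n + 1) x := by
        have := (h1 x).2.2.2; push_cast at this ⊢; linarith
      have hA0 : 2 * (x - 1) * dW0 x + W n x = (2 * (n : ℝ) + 1) * V n x := (h0 x).2.2.2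
      have hVrec : ∀ y : ℝ, V (n + 1) y = 2 * y * V n y - V (n - 1) y := by
        intro y
        rcases n with _ | m
        · rw [hV1, hV0]; ring
        · exact hV (m + 1) (by omega) y
      refine ⟨?_, ?_, ?_, ?_⟩
      · have hfun : W (n + 2) = fun y => 2 * y * W (n + 1) y - W n y := by
          funext y; exact hW (n + 1) (by omega) y
        rw [hfun]
        have h := (((hasDerivAt_id x).const_mul (2 : ℝ)).mul (h1 x).1).sub (h0 x).1
        refine h.congr_deriv ?_
        simp only [id_eq]
        ring
      · rw [hV (n + 1) (by omega), hW (n + 1) (by omega)]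
        have e0 := (h0 x).2.1
        have e1 := (h1 x).2.1
        simp only [Nat.add_sub_cancel]
        rw [e0, e1, pow_succ, pow_succ]
        ring
      · rw [hV (n + 1) (by omega), hW (n + 1) (by omega)]
        have := hVrec x
        simp only [Nat.add_sub_cancel]
        linear_combination 2 * x * hB1 - hB0 - this
      · rw [hV (n + 1) (by omega), hW (n + 1) (by omega)]
        push_cast
        linear_combination 2 * x * hA1 - hA0 - 4 * hB1
  exact fun n => (main n).1

/-- For the Chebyshev polynomials of the third and fourth kind `V_n`, `W_n`:
(i) `V_n(-x) = (-1)^n·W_n(x)`, and (ii) `V_n` satisfies the Dunkl-type first-order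
eigenvalue equation `2(x - 1)·d/dx[V_n(-x)] + V_n(-x) = (-1)^n(2n + 1)·V_n(x)`
(the eigenvalue equation of the little -1 Jacobi polynomials with `α = β = 0`). -/
theorem stmt_19 (V W : ℕ → ℝ → ℝ)
    (hV0 : ∀ x : ℝ, V 0 x = 1) (hW0 : ∀ x : ℝ, W 0 x = 1)
    (hV1 : ∀ x : ℝ, V 1 x = 2 * x - 1) (hW1 : ∀ x : ℝ, W 1 x = 2 * x + 1)
    (hV : ∀ n : ℕ, 1 ≤ n → ∀ x : ℝ, V (n + 1) x = 2 * x * V n x - V (n - 1) x)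
    (hW : ∀ n : ℕ, 1 ≤ n → ∀ x : ℝ, W (n + 1) x = 2 * x * W n x - W (n - 1) x) :
    (∀ (n : ℕ) (x : ℝ), V n (-x) = (-1 : ℝ) ^ n * W n x) ∧
    (∀ (n : ℕ) (x : ℝ),
      2 * (x - 1) * deriv (fun y => V n (-y)) x + V n (-x) =
        (-1 : ℝ) ^ n * (2 * (n : ℝ) + 1) * V n x) := by
  have key := cheb_key V W hV0 hW0 hV1 hW1 hV hW
  constructor
  · intro n x
    obtain ⟨dW, h⟩ := key n
    exact (h x).2.1
  · intro n x
    obtain ⟨dW, h⟩ := key n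
    have hfun : (fun y => V n (-y)) = fun y => (-1 : ℝ) ^ n * W n y :=
      funext fun y => (h y).2.1
    rw [hfun]
    have hd : deriv (fun y => (-1 : ℝ) ^ n * W n y) x = (-1 : ℝ) ^ n * dW x :=
      ((h x).1.const_mul _).deriv
    rw [hd, (h x).2.1]
    linear_combination ((-1 : ℝ) ^ n) * (h x).2.2.2
end
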